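/- arXiv:2001.06779 — 10 statements merged into one kernel-verified Lean document; each statement's English description precedes it below -/
import Mathlib

section
/- For any MHR distribution H on positive integers with mean μ, E_{h~H}[1 - (1-1/μ)^h] ≥ 1/(2 - 1/μ). -/
/-!
Write `S i = P[h > i]` and `q = 1 - 1/μ`. Then `μ = ∑ S i`, and Abel summation gives
`E[1 - q^h] = (1 - q) ∑ S i q^i`. The geometric law with the same mean has tails `q^i`.
Because the hazard ratios `S (i+1) / S i` decrease, `S i - q^i` changes sign at most once,
from `+` to `-`; since it sums to `0`, weighting by the decreasing `q^i` gives
`∑ S i q^i ≥ ∑ q^(2i) = 1/(1 - q^2)`, so `E[1 - q^h] ≥ (1 - q)/(1 - q^2) = 1/(2 - 1/μ)`.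
-/

open Finset

theorem tsum_ite_lt_eq_tsum_add {α : Type*} [AddCommMonoid α] [TopologicalSpace α]
    (f : ℕ → α) (i : ℕ) : ∑' k, (if i < k then f k else 0) = ∑' j, f (i + 1 + j) := by
  have hinj : Function.Injective (i + 1 + ·) := fun a b h => by simpa using h
  rw [← hinj.tsum_eq]
  · exact tsum_congr fun j => if_pos (by omega)
  · intro k hk
    have hik : i < k := by by_contra h; exact hk (if_neg h)
    exact ⟨k - (i + 1), by simp only; omega⟩

theorem tsum_add_eq_add_tsum_add {p : ℕ → ℝ} (hp : Summable p) (k : ℕ) :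
    ∑' j, p (k + j) = p k + ∑' j, p (k + 1 + j) := by
  have hpk : Summable fun j => p (k + j) := hp.comp_injective (add_right_injective k)
  rw [hpk.tsum_eq_zero_add, add_zero]
  exact congrArg _ (tsum_congr fun j => by rw [add_assoc, add_comm j])

theorem hasSum_mul_tail {p w : ℕ → ℝ} (hp : 0 ≤ p) (hw : 0 ≤ w)
    (h : Summable fun k => p k * ∑ i ∈ range k, w i) :
    HasSum (fun i => w i * ∑' j, p (i + 1 + j)) (∑' k, p k * ∑ i ∈ range k, w i) := by
  set F : ℕ × ℕ → ℝ := fun x => if x.2 < x.1 then p x.1 * w x.2 else 0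
  have hF0 : 0 ≤ F := fun x => by
    dsimp only [F]; split_ifs
    exacts [mul_nonneg (hp _) (hw _), le_rfl]
  have hrow : ∀ k, HasSum (fun i => F (k, i)) (p k * ∑ i ∈ range k, w i) := by
    intro k
    have := hasSum_sum_of_ne_finset_zero (L := SummationFilter.unconditional ℕ) (s := range k)
      (f := fun i => F (k, i)) fun i hi => if_neg (by simpa using hi)
    rwa [mul_sum, ← sum_congr rfl fun i hi => if_pos (mem_range.1 hi)]
  have hF : Summable F := (summable_prod_of_nonneg hF0).2
    ⟨fun k => (hrow k).summable, by simpa only [(hrow _).tsum_eq] using h⟩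
  have hcol : ∀ i, HasSum (fun k => F (k, i)) (w i * ∑' j, p (i + 1 + j)) := by
    intro i
    have hs : Summable fun k => F (k, i) :=
      ((summable_prod_of_nonneg fun x => hF0 x.swap).1 hF.prod_symm).1 i
    convert hs.hasSum using 1
    rw [← tsum_ite_lt_eq_tsum_add, ← tsum_mul_left]
    exact tsum_congr fun k => by dsimp only [F]; split_ifs <;> ring
  have hswap : HasSum (fun x : ℕ × ℕ => F x.swap) (∑' x, F x) :=
    (Equiv.prodComm ℕ ℕ).hasSum_iff (f := F) |>.2 hF.hasSum
  rw [(hF.hasSum.prod_fiberwise hrow).tsum_eq]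
  exact hswap.prod_fiberwise hcol

theorem hasSum_tail_tsum {p : ℕ → ℝ} (hp : 0 ≤ p) (hms : Summable fun k => p k * k) :
    HasSum (fun i => ∑' j, p (i + 1 + j)) (∑' k, p k * k) := by
  simpa using hasSum_mul_tail hp (fun _ => zero_le_one) (w := fun _ => 1) (by simpa using hms)

theorem tsum_mul_one_sub_pow_eq {p : ℕ → ℝ} {q : ℝ} (hp : 0 ≤ p)
    (hms : Summable fun k => p k * k) (hq0 : 0 ≤ q) (hq1 : q ≤ 1) :
    ∑' k, p k * (1 - q ^ k) = (1 - q) * ∑' i, q ^ i * ∑' j, p (i + 1 + j) := by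
  have hgeom_le : ∀ k : ℕ, ∑ i ∈ range k, q ^ i ≤ k := fun k => by
    simpa using sum_le_card_nsmul (range k) _ 1 fun i _ => pow_le_one₀ hq0 hq1
  have hs : Summable fun k => p k * ∑ i ∈ range k, q ^ i :=
    hms.of_nonneg_of_le (fun k => mul_nonneg (hp k) (sum_nonneg fun i _ => pow_nonneg hq0 i))
      fun k => mul_le_mul_of_nonneg_left (hgeom_le k) (hp k)
  rw [(hasSum_mul_tail hp (fun i => pow_nonneg hq0 i) hs).tsum_eq, ← tsum_mul_left]
  exact tsum_congr fun k => by rw [← geom_sum_mul_neg]; ring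

theorem le_pow_mul_of_lt_pow_mul {S : ℕ → ℝ} {q : ℝ} (hq : 0 ≤ q) (hS : 0 ≤ S)
    (hanti : Antitone S) (hratio : Antitone fun n => S (n + 1) / S n) {i j : ℕ} (hij : i ≤ j)
    (hi : S i < q ^ i * S 0) : S j ≤ q ^ j * S 0 := by
  -- Some hazard ratio before `i` is already below `q`, and all later ratios are smaller still.
  obtain ⟨a, hai, ha⟩ : ∃ a < i, S (a + 1) < q * S a := by
    by_contra! h
    exact (geom_le hq i h).not_gt hi
  have hSa : 0 < S a := pos_of_mul_pos_right ((hS _).trans_lt ha) hq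
  have hstep : ∀ k, a ≤ k → S (k + 1) ≤ q * S k := by
    intro k hak
    rcases (show (0 : ℝ) ≤ S k from hS k).eq_or_lt with hk | hk
    · rw [← hk, mul_zero]
      exact (hanti k.le_succ).trans hk.ge
    · have : S (k + 1) / S k < q := (hratio hak).trans_lt ((div_lt_iff₀ hSa).2 ha)
      exact ((div_lt_iff₀ hk).1 this).le
  obtain ⟨n, rfl⟩ := Nat.exists_eq_add_of_le hij
  calc S (i + n) ≤ q ^ n * S (i + 0) :=
        le_geom (u := fun n => S (i + n)) hq n fun k _ => hstep (i + k) (by omega)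
    _ ≤ q ^ n * (q ^ i * S 0) := by gcongr; exact hi.le
    _ = q ^ (i + n) * S 0 := by ring

theorem mul_tsum_le_tsum_mul_of_sign_change {c w : ℕ → ℝ} {m : ℕ} (hc : Summable c)
    (hcw : Summable fun i => c i * w i) (hw : Antitone w) (hpos : ∀ i < m, 0 ≤ c i)
    (hneg : ∀ i, m ≤ i → c i ≤ 0) : w m * ∑' i, c i ≤ ∑' i, c i * w i := by
  rw [← tsum_mul_left]
  refine (hc.mul_left _).tsum_le_tsum (fun i => ?_) hcw
  rw [mul_comm]
  rcases lt_or_ge i m with h | h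
  · exact mul_le_mul_of_nonneg_left (hw h.le) (hpos i h)
  · exact mul_le_mul_of_nonpos_left (hw h) (hneg i h)

theorem tsum_mul_nonneg_of_sign_change {c w : ℕ → ℝ} (hc : HasSum c 0)
    (hcw : Summable fun i => c i * w i) (hw : Antitone w) (hw0 : 0 ≤ w)
    (hcross : ∀ i j, i ≤ j → c i < 0 → c j ≤ 0) : 0 ≤ ∑' i, c i * w i := by
  classical
  by_cases h : ∃ m, c m < 0
  · have := mul_tsum_le_tsum_mul_of_sign_change hc.summable hcw hw
      (fun i hi => not_lt.1 (Nat.find_min h hi)) fun i hi => hcross _ i hi (Nat.find_spec h)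
    rwa [hc.tsum_eq, mul_zero] at this
  · push Not at h
    exact tsum_nonneg fun i => mul_nonneg (h i) (hw0 i)

theorem inv_one_sub_sq_le_tsum_mul_pow {S : ℕ → ℝ} {q : ℝ} (hq0 : 0 ≤ q) (hq1 : q < 1)
    (hS0 : S 0 = 1) (hS : 0 ≤ S) (hanti : Antitone S)
    (hratio : Antitone fun n => S (n + 1) / S n) (hmean : HasSum S (1 - q)⁻¹) :
    (1 - q ^ 2)⁻¹ ≤ ∑' i, S i * q ^ i := by
  have hgeom := hasSum_geometric_of_lt_one hq0 hq1
  have hgeom_sq : HasSum (fun i => q ^ i * q ^ i) (1 - q ^ 2)⁻¹ := by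
    convert hasSum_geometric_of_lt_one (sq_nonneg q) (by nlinarith) using 2 with i
    ring
  have hSq : Summable fun i => S i * q ^ i :=
    hmean.summable.of_nonneg_of_le (fun i => mul_nonneg (hS i) (pow_nonneg hq0 i))
      fun i => mul_le_of_le_one_right (hS i) (pow_le_one₀ hq0 hq1.le)
  have hcross : ∀ i j, i ≤ j → S i - q ^ i < 0 → S j - q ^ j ≤ 0 := fun i j hij hi => by
    have := le_pow_mul_of_lt_pow_mul hq0 hS hanti hratio hij (by rw [hS0, mul_one]; linarith)
    rw [hS0, mul_one] at this
    linarith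
  have := tsum_mul_nonneg_of_sign_change (by simpa using hmean.sub hgeom)
    (by simpa only [sub_mul] using hSq.sub hgeom_sq.summable) (pow_right_anti₀ hq0 hq1.le)
    (fun i => pow_nonneg hq0 i) hcross
  simp only [sub_mul] at this
  rw [hSq.tsum_sub hgeom_sq.summable, hgeom_sq.tsum_eq] at this
  linarith

/-- For any MHR distribution `p` on positive integers with mean μ ≥ 1,
E[1 - (1-1/μ)^h] ≥ 1/(2 - 1/μ). -/
theorem mhr_expectation_lower_bound (p : ℕ → ℝ) (hp0 : p 0 = 0) (hnn : ∀ k, 0 ≤ p k)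
    (hsum : ∑' k, p k = 1)
    (T : ℕ → ℝ) (hT : ∀ k, T k = ∑' j : ℕ, p (k + j))
    (hMHR : ∀ k, 1 ≤ k → T (k + 2) / T (k + 1) ≤ T (k + 1) / T k)
    (μ : ℝ) (hμ : 1 ≤ μ) (hms : Summable (fun k : ℕ => p k * k))
    (hmean : ∑' k : ℕ, p k * k = μ) :
    1 / (2 - 1 / μ) ≤ ∑' k : ℕ, p k * (1 - (1 - 1 / μ) ^ k) := by
  have hμ0 : 0 < μ := zero_lt_one.trans_le hμ
  set q := 1 - 1 / μ with hq
  have hq0 : 0 ≤ q := sub_nonneg.2 (div_le_one_of_le₀ hμ hμ0.le)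
  have hq1 : q < 1 := sub_lt_self 1 (by positivity)
  have hp : Summable p := by
    by_contra h
    rw [tsum_eq_zero_of_not_summable h] at hsum
    exact zero_ne_one hsum
  have hT_succ : ∀ k, T k = p k + T (k + 1) := fun k => by
    rw [hT, hT, tsum_add_eq_add_tsum_add hp]
  have hT1 : T 1 = 1 := by
    have h0 := hT_succ 0
    simp only [hT 0, zero_add, hsum, hp0] at h0
    linarith
  set S : ℕ → ℝ := fun n => T (n + 1)
  have hS : 0 ≤ S := fun n => by
    simp only [Pi.zero_apply, S, hT]
    exact tsum_nonneg fun j => hnn _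
  have hanti : Antitone S :=
    antitone_nat_of_succ_le fun n => by linarith [hT_succ (n + 1), hnn (n + 1)]
  have hratio : Antitone fun n => S (n + 1) / S n :=
    antitone_nat_of_succ_le fun n => hMHR (n + 1) le_add_self
  have hmeanS : HasSum S (1 - q)⁻¹ := by
    rw [hq, sub_sub_cancel, one_div, inv_inv, ← hmean]
    simpa only [S, hT] using hasSum_tail_tsum hnn hms
  calc 1 / (2 - 1 / μ) = (1 - q) * (1 - q ^ 2)⁻¹ := by rw [hq]; field_simp; ring
    _ ≤ (1 - q) * ∑' i, S i * q ^ i := by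
      gcongr
      exact inv_one_sub_sq_le_tsum_mul_pow hq0 hq1 hT1 hS hanti hratio hmeanS
    _ = ∑' k, p k * (1 - q ^ k) := by
      rw [tsum_mul_one_sub_pow_eq hnn hms hq0 hq1.le]
      simp only [S, hT, mul_comm]
end

section
/- Among all MHR distributions on positive integers with mean μ, the geometric distribution with mean μ is second-order stochastically dominated by every other such distribution; equivalently, for every positive integer c, E_{x~D}[max(c - x, 0)] ≤ E_{x~G}[max(c - x, 0)] for any MHR distribution D with mean μ, where G is the geometric distribution with mean μ. -/
/-!
With `q = 1 - 1/μ`, the geometric law has `P[x > j] = q ^ j`, and for any law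
`E[(c - x)⁺] = ∑_{j < c} P[x ≤ j] = ∑_{j < c} (1 - P[x > j])`. So it suffices that
`∑_{j < c} q ^ j ≤ ∑_{j < c} P[x > j]`. Both sequences start at `1` and sum to `μ` (tail-sum
formula for the mean). The MHR condition says that the ratios `P[x > j + 1] / P[x > j]`
decrease, so once `P[x > j]` drops below `q ^ j` some ratio is below `q` and so are all later
ones: the tails cross the geometric sequence at most once, from above. Equal totals and a single
crossing give the inequality between partial sums.
-/

open Filter Finset Topology

theorem sum_range_mul_sub_eq_sum_range_sum_range (f : ℕ → ℝ) (c : ℕ) :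
    ∑ k ∈ range c, f k * ((c : ℝ) - k) = ∑ j ∈ range c, ∑ k ∈ range (j + 1), f k := by
  induction c with
  | zero => simp
  | succ c ih =>
    have hsplit : ∑ k ∈ range c, f k * ((c : ℝ) + 1 - k) =
        ∑ k ∈ range c, f k * ((c : ℝ) - k) + ∑ k ∈ range c, f k := by
      rw [← sum_add_distrib]
      exact sum_congr rfl fun k _ => by ring
    rw [sum_range_succ, sum_range_succ _ c, ← ih, sum_range_succ f c]
    push_cast
    rw [hsplit]
    ring

theorem tsum_mul_max_sub_eq_sum_range_sum_range (f : ℕ → ℝ) (c : ℕ) :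
    ∑' k : ℕ, f k * max ((c : ℝ) - k) 0 = ∑ j ∈ range c, ∑ k ∈ range (j + 1), f k := by
  rw [← sum_range_mul_sub_eq_sum_range_sum_range, tsum_eq_sum (s := range c)]
  · refine sum_congr rfl fun k hk => ?_
    have : (k : ℝ) ≤ c := by exact_mod_cast (mem_range.1 hk).le
    rw [max_eq_left (by linarith)]
  · intro k hk
    have : (c : ℝ) ≤ k := by exact_mod_cast not_lt.1 (mem_range.not.1 hk)
    rw [max_eq_right (by linarith), mul_zero]

theorem sum_range_succ_geometric_pmf (θ : ℝ) (j : ℕ) :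
    ∑ k ∈ range (j + 1), (if k = 0 then (0 : ℝ) else θ * (1 - θ) ^ (k - 1)) = 1 - (1 - θ) ^ j := by
  induction j with
  | zero => simp
  | succ j ih =>
    rw [sum_range_succ, ih, if_neg j.succ_ne_zero, Nat.add_sub_cancel, pow_succ]
    ring

theorem sum_range_le_sum_range_of_crossing {a b : ℕ → ℝ} {A B : ℝ} (ha : HasSum a A)
    (hb : HasSum b B) (hBA : B ≤ A) (hcross : ∀ i j, i ≤ j → a i < b i → a j ≤ b j) (c : ℕ) :
    ∑ j ∈ range c, b j ≤ ∑ j ∈ range c, a j := by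
  by_cases hle : ∀ j < c, b j ≤ a j
  · exact sum_le_sum fun j hj => hle j (mem_range.1 hj)
  push Not at hle
  obtain ⟨i, hic, hi⟩ := hle
  have htail : ∑' k, a (k + c) ≤ ∑' k, b (k + c) :=
    Summable.tsum_le_tsum (fun k => hcross i (k + c) (by omega) hi)
      ((summable_nat_add_iff c).2 ha.summable) ((summable_nat_add_iff c).2 hb.summable)
  have hA := ha.summable.sum_add_tsum_nat_add c
  have hB := hb.summable.sum_add_tsum_nat_add c
  rw [ha.tsum_eq] at hA
  rw [hb.tsum_eq] at hB
  linarith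

section RatioAntitone

variable {a : ℕ → ℝ} {q : ℝ}

theorem mul_le_of_ratio_antitone (hnn : ∀ k, 0 ≤ a k) (hanti : ∀ k, a (k + 1) ≤ a k)
    (hratio : ∀ k, a (k + 2) / a (k + 1) ≤ a (k + 1) / a k) {k : ℕ}
    (hk : a (k + 1) ≤ q * a k) : a (k + 2) ≤ q * a (k + 1) := by
  rcases (hnn (k + 1)).eq_or_lt with hzero | hpos
  · rw [← hzero, mul_zero]
    exact hzero ▸ hanti (k + 1)
  have hak : 0 < a k := hpos.trans_le (hanti k)
  have := (hratio k).trans ((div_le_iff₀ hak).2 hk)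
  rwa [div_le_iff₀ hpos] at this

theorem mul_le_of_ratio_antitone_of_le (hnn : ∀ k, 0 ≤ a k) (hanti : ∀ k, a (k + 1) ≤ a k)
    (hratio : ∀ k, a (k + 2) / a (k + 1) ≤ a (k + 1) / a k) {k : ℕ}
    (hk : a (k + 1) ≤ q * a k) {j : ℕ} (hkj : k ≤ j) : a (j + 1) ≤ q * a j := by
  induction j, hkj using Nat.le_induction with
  | base => exact hk
  | succ j _ ih => exact mul_le_of_ratio_antitone hnn hanti hratio ih

theorem le_pow_of_ratio_antitone (hnn : ∀ k, 0 ≤ a k) (hanti : ∀ k, a (k + 1) ≤ a k)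
    (hratio : ∀ k, a (k + 2) / a (k + 1) ≤ a (k + 1) / a k) (h0 : 1 ≤ a 0) (hq : 0 ≤ q)
    {i j : ℕ} (hij : i ≤ j) (hi : a i < q ^ i) : a j ≤ q ^ j := by
  obtain ⟨k, hki, hk⟩ : ∃ k < i, a (k + 1) ≤ q * a k := by
    by_contra! hgt
    have := geom_le hq i fun k hk => (hgt k hk).le
    nlinarith [pow_nonneg hq i]
  obtain ⟨n, rfl⟩ := Nat.exists_eq_add_of_le hij
  calc a (i + n) ≤ q ^ n * a i :=
        le_geom (u := fun n => a (i + n)) hq n fun m _ =>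
          mul_le_of_ratio_antitone_of_le hnn hanti hratio hk (show k ≤ i + m by omega)
    _ ≤ q ^ n * q ^ i := mul_le_mul_of_nonneg_left hi.le (pow_nonneg hq n)
    _ = q ^ (i + n) := by ring

end RatioAntitone

noncomputable def tailSum (p : ℕ → ℝ) (k : ℕ) : ℝ := ∑' i, p (k + i)

section TailSum

variable {p : ℕ → ℝ}

theorem tailSum_nonneg (hnn : ∀ k, 0 ≤ p k) (k : ℕ) : 0 ≤ tailSum p k :=
  tsum_nonneg fun _ => hnn _

theorem tailSum_eq_tsum_add (k : ℕ) : tailSum p k = ∑' i, p (i + k) := by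
  simp only [tailSum, add_comm k]

theorem sum_range_add_tailSum (hp : Summable p) (n : ℕ) :
    ∑ k ∈ range n, p k + tailSum p n = ∑' k, p k := by
  rw [tailSum_eq_tsum_add]
  exact hp.sum_add_tsum_nat_add n

theorem tailSum_eq_add_tailSum_succ (hp : Summable p) (k : ℕ) :
    tailSum p k = p k + tailSum p (k + 1) := by
  have h := sum_range_add_tailSum hp (k + 1)
  rw [sum_range_succ, ← sum_range_add_tailSum hp k] at h
  linarith

theorem tailSum_one (hp : Summable p) : tailSum p 1 = ∑' k, p k - p 0 := by
  linarith [sum_range_add_tailSum hp 1, sum_range_one p]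

theorem tailSum_succ_le (hnn : ∀ k, 0 ≤ p k) (hp : Summable p) (k : ℕ) :
    tailSum p (k + 1) ≤ tailSum p k := by
  linarith [tailSum_eq_add_tailSum_succ hp k, hnn k]

theorem sum_range_tailSum_succ (hp : Summable p) (n : ℕ) :
    ∑ j ∈ range n, tailSum p (j + 1) = ∑ k ∈ range n, p k * k + n * tailSum p n := by
  induction n with
  | zero => simp
  | succ n ih =>
    rw [sum_range_succ, ih, sum_range_succ, tailSum_eq_add_tailSum_succ hp n]
    push_cast
    ring

theorem tendsto_mul_tailSum (hnn : ∀ k, 0 ≤ p k) (hp : Summable p)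
    (hm : Summable fun k : ℕ => p k * k) :
    Tendsto (fun n : ℕ => n * tailSum p n) atTop (𝓝 0) := by
  have hbound : ∀ n : ℕ, n * tailSum p n ≤ ∑' i, p (i + n) * ↑(i + n) := fun n => by
    rw [tailSum_eq_tsum_add, ← tsum_mul_left]
    refine Summable.tsum_le_tsum (fun i => ?_) (((summable_nat_add_iff n).2 hp).mul_left _)
      ((summable_nat_add_iff n).2 hm)
    rw [mul_comm]
    gcongr
    · exact hnn _
    · exact_mod_cast Nat.le_add_left n i
  exact squeeze_zero (fun n => mul_nonneg n.cast_nonneg (tailSum_nonneg hnn n)) hbound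
    (tendsto_sum_nat_add fun k => p k * k)

theorem hasSum_tailSum_succ (hnn : ∀ k, 0 ≤ p k) (hp : Summable p)
    (hm : Summable fun k : ℕ => p k * k) :
    HasSum (fun j => tailSum p (j + 1)) (∑' k : ℕ, p k * k) := by
  rw [hasSum_iff_tendsto_nat_of_nonneg fun j => tailSum_nonneg hnn (j + 1)]
  simpa [sum_range_tailSum_succ hp] using
    hm.hasSum.tendsto_sum_nat.add (tendsto_mul_tailSum hnn hp hm)

end TailSum

theorem hasSum_pow_one_sub_one_div {μ : ℝ} (hμ : 1 ≤ μ) :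
    HasSum (fun j => (1 - 1 / μ) ^ j) μ := by
  convert hasSum_geometric_of_lt_one (sub_nonneg.2 ((div_le_one (by linarith)).2 hμ))
    (by simp; positivity) using 1
  simp

theorem mhr_sosd_geometric_general (p : ℕ → ℝ) (hp0 : p 0 = 0) (hnn : ∀ k, 0 ≤ p k)
    (hsum : ∑' k, p k = 1)
    (T : ℕ → ℝ) (hT : ∀ k, T k = ∑' j : ℕ, p (k + j))
    (hMHR : ∀ k, 1 ≤ k → T (k + 2) / T (k + 1) ≤ T (k + 1) / T k)
    (μ : ℝ) (hms : Summable (fun k : ℕ => p k * k))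
    (hmean : ∑' k : ℕ, p k * k = μ) :
    ∀ c : ℕ, 1 ≤ c →
      ∑' k : ℕ, p k * max ((c : ℝ) - k) 0 ≤
        ∑' k : ℕ, (if k = 0 then (0 : ℝ) else (1 / μ) * (1 - 1 / μ) ^ (k - 1)) *
          max ((c : ℝ) - k) 0 := by
  intro c _
  simp only [tsum_mul_max_sub_eq_sum_range_sum_range, sum_range_succ_geometric_pmf]
  obtain rfl : T = tailSum p := funext hT
  have hp : Summable p := by
    by_contra h
    rw [tsum_eq_zero_of_not_summable h] at hsum
    exact zero_ne_one hsum
  have hcdf (n : ℕ) : ∑ k ∈ range n, p k = 1 - tailSum p n := by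
    linarith [sum_range_add_tailSum hp n]
  set a : ℕ → ℝ := fun j => tailSum p (j + 1)
  have ha0 : a 0 = 1 := by simp [a, tailSum_one hp, hsum, hp0]
  have ha : HasSum a μ := hmean ▸ hasSum_tailSum_succ hnn hp hms
  have hμ : 1 ≤ μ := ha0 ▸ le_hasSum ha 0 fun j _ => tailSum_nonneg hnn _
  have hq : 0 ≤ 1 - 1 / μ := sub_nonneg.2 ((div_le_one (by linarith)).2 hμ)
  have hcross (i j : ℕ) (hij : i ≤ j) (hi : a i < (1 - 1 / μ) ^ i) : a j ≤ (1 - 1 / μ) ^ j :=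
    le_pow_of_ratio_antitone (fun k => tailSum_nonneg hnn _) (fun k => tailSum_succ_le hnn hp _)
      (fun k => hMHR (k + 1) k.succ_pos) ha0.ge hq hij hi
  have hpartial := sum_range_le_sum_range_of_crossing ha (hasSum_pow_one_sub_one_div hμ) le_rfl
    hcross c
  simp only [hcdf, sum_sub_distrib]
  linarith

/-- The geometric distribution with mean μ is second-order stochastically dominated by
every MHR distribution `p` on positive integers with the same mean μ: for every positive
integer c, E_{x ~ p}[max(c - x, 0)] ≤ E_{x ~ Geom(1/μ)}[max(c - x, 0)]. -/
theorem mhr_sosd_geometric (p : ℕ → ℝ) (hp0 : p 0 = 0) (hnn : ∀ k, 0 ≤ p k)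
    (hsum : ∑' k, p k = 1)
    (T : ℕ → ℝ) (hT : ∀ k, T k = ∑' j : ℕ, p (k + j))
    (hMHR : ∀ k, 1 ≤ k → T (k + 2) / T (k + 1) ≤ T (k + 1) / T k)
    (μ : ℝ) (hμ : 1 ≤ μ) (hms : Summable (fun k : ℕ => p k * k))
    (hmean : ∑' k : ℕ, p k * k = μ) :
    ∀ c : ℕ, 1 ≤ c →
      ∑' k : ℕ, p k * max ((c : ℝ) - k) 0 ≤
        ∑' k : ℕ, (if k = 0 then (0 : ℝ) else (1 / μ) * (1 - 1 / μ) ^ (k - 1)) *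
          max ((c : ℝ) - k) 0 :=
  mhr_sosd_geometric_general p hp0 hnn hsum T hT hMHR μ hms hmean
end

section
/- If distribution A on ℝ second-order stochastically dominates distribution B (i.e., ∫_{-∞}^x (F_B(t) - F_A(t)) dt ≥ 0 for all x) and A and B have the same finite mean, then for every convex function f : ℝ → ℝ (for which both expectations exist), E_{x~B}[f(x)] ≥ E_{x~A}[f(x)]. -/
/-!
A convex `f` is recovered, up to an affine function, from the Stieltjes measure `ρ` of its right
derivative `f'₊`: Taylor's formula with integral remainder reads
`f x - f 0 - f'₊ 0 * x = ∫_{(0,∞)} (x - t)⁺ dρ(t) + ∫_{(-∞,0]} (t - x)⁺ dρ(t)`.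
Integrating in `x` and swapping the integrals (Tonelli) reduces the claim to the hinge inequalities
`E_A (t - X)⁺ ≤ E_B (t - X)⁺` and `E_A (X - t)⁺ ≤ E_B (X - t)⁺` for all `t`. The first is the
dominance hypothesis, because `E (t - X)⁺ = ∫_{-∞}^t F(s) ds`; the second follows from the first
since `(X - t)⁺ = (t - X)⁺ + (X - t)` and the means agree.
-/

open MeasureTheory Set Filter Topology

-- Both sides are the `ν ⊗ volume`-measure of `{(t, u) | t ∈ A, t ≤ u ≤ b}`.
theorem setLIntegral_ofReal_sub_eq_lintegral_measure_inter_Iic (ν : Measure ℝ) [SFinite ν]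
    {A : Set ℝ} (hA : MeasurableSet A) (b : ℝ) :
    ∫⁻ t in A, ENNReal.ofReal (b - t) ∂ν = ∫⁻ u in Iic b, ν (A ∩ Iic u) := by
  set S : Set (ℝ × ℝ) := {p | p.1 ∈ A ∧ p.1 ≤ p.2 ∧ p.2 ≤ b}
  have hS : MeasurableSet S :=
    (hA.preimage measurable_fst).inter ((measurableSet_le measurable_fst measurable_snd).inter
      (measurableSet_Iic.preimage measurable_snd))
  rw [← lintegral_indicator hA, ← lintegral_indicator measurableSet_Iic]
  calc _ = ∫⁻ t, volume (Prod.mk t ⁻¹' S) ∂ν := lintegral_congr fun t => ?_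
    _ = ∫⁻ u, ν ((fun t => (t, u)) ⁻¹' S) := by
      rw [← Measure.prod_apply hS, Measure.prod_apply_symm hS]
    _ = _ := lintegral_congr fun u => ?_
  · by_cases ht : t ∈ A <;> simp [S, ht, indicator, ← Real.volume_Icc, Icc_def]
  · by_cases hu : u ≤ b <;> simp [S, hu, indicator, inter_def]

-- Both sides are the `ν ⊗ volume`-measure of `{(t, u) | t ∈ A, a < u < t}`.
theorem setLIntegral_ofReal_sub_eq_lintegral_measure_inter_Ioi (ν : Measure ℝ) [SFinite ν]
    {A : Set ℝ} (hA : MeasurableSet A) (a : ℝ) :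
    ∫⁻ t in A, ENNReal.ofReal (t - a) ∂ν = ∫⁻ u in Ioi a, ν (A ∩ Ioi u) := by
  set S : Set (ℝ × ℝ) := {p | p.1 ∈ A ∧ a < p.2 ∧ p.2 < p.1}
  have hS : MeasurableSet S :=
    (hA.preimage measurable_fst).inter ((measurableSet_Ioi.preimage measurable_snd).inter
      (measurableSet_lt measurable_snd measurable_fst))
  rw [← lintegral_indicator hA, ← lintegral_indicator measurableSet_Ioi]
  calc _ = ∫⁻ t, volume (Prod.mk t ⁻¹' S) ∂ν := lintegral_congr fun t => ?_
    _ = ∫⁻ u, ν ((fun t => (t, u)) ⁻¹' S) := by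
      rw [← Measure.prod_apply hS, Measure.prod_apply_symm hS]
    _ = _ := lintegral_congr fun u => ?_
  · by_cases ht : t ∈ A <;> simp [S, ht, indicator, ← Real.volume_Ioo, Ioo_def]
  · by_cases hu : a < u <;> simp [S, hu, indicator, inter_def]

namespace ConvexOn

variable {f : ℝ → ℝ}

protected lemma continuous (hf : ConvexOn ℝ univ f) : Continuous f :=
  continuousOn_univ.mp (hf.continuousOn isOpen_univ)

lemma monotone_rightDeriv (hf : ConvexOn ℝ univ f) :
    Monotone fun x => derivWithin f (Ioi x) x := fun _ _ hxy =>
  hf.monotoneOn_rightDeriv (by simp) (by simp) hxy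

lemma add_rightDeriv_mul_sub_le (hf : ConvexOn ℝ univ f) (a x : ℝ) :
    f a + derivWithin f (Ioi a) a * (x - a) ≤ f x := by
  rcases lt_trichotomy a x with hax | rfl | hxa
  · have h := hf.rightDeriv_le_slope_of_mem_interior (by simp) trivial hax
    rw [slope_def_field, le_div_iff₀ (sub_pos.2 hax)] at h
    linarith
  · simp
  · have h := (hf.slope_le_leftDeriv_of_mem_interior trivial (by simp) hxa).trans
      (hf.leftDeriv_le_rightDeriv_of_mem_interior (by simp))
    rw [slope_def_field, div_le_iff₀ (sub_pos.2 hxa)] at h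
    linarith

lemma continuousWithinAt_rightDeriv (hf : ConvexOn ℝ univ f) (x : ℝ) :
    ContinuousWithinAt (fun y => derivWithin f (Ioi y) y) (Ici x) x := by
  rw [← continuousWithinAt_Ioi_iff_Ici, ContinuousWithinAt, tendsto_order]
  refine ⟨fun l hl => eventually_nhdsWithin_of_forall fun y hy =>
    hl.trans_le (hf.monotone_rightDeriv (le_of_lt hy)), fun u hu => ?_⟩
  -- Pick `z > x` with `slope f x z < u`; then `f'₊ y ≤ slope f y z < u` for `y > x` close to `x`.
  have hslope : Tendsto (slope f x) (𝓝[>] x) (𝓝 (derivWithin f (Ioi x) x)) :=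
    (hasDerivWithinAt_iff_tendsto_slope' self_notMem_Ioi).mp
      (hf.hasDerivWithinAt_rightDeriv_of_mem_interior (by simp))
  obtain ⟨z, hz, hxz⟩ := ((hslope.eventually (gt_mem_nhds hu)).and self_mem_nhdsWithin).exists
  have hcont : ContinuousAt (fun y => slope f y z) x := by
    simp only [slope_def_field]
    exact ((continuous_const.sub hf.continuous).continuousAt).div
      (continuous_const.sub continuous_id).continuousAt (sub_ne_zero.2 (ne_of_gt hxz))
  filter_upwards [nhdsWithin_le_nhds (hcont.eventually (gt_mem_nhds hz)), Ioo_mem_nhdsGT hxz]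
    with y hyu hy
  exact (hf.rightDeriv_le_slope_of_mem_interior (by simp) trivial hy.2).trans_lt hyu

noncomputable def rightDerivStieltjes (hf : ConvexOn ℝ univ f) : StieltjesFunction ℝ where
  toFun x := derivWithin f (Ioi x) x
  mono' := hf.monotone_rightDeriv
  right_continuous' := hf.continuousWithinAt_rightDeriv

@[simp]
lemma rightDerivStieltjes_apply (hf : ConvexOn ℝ univ f) (x : ℝ) :
    hf.rightDerivStieltjes x = derivWithin f (Ioi x) x := rfl

lemma integral_rightDeriv (hf : ConvexOn ℝ univ f) {a b : ℝ} (hab : a ≤ b) :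
    ∫ u in a..b, derivWithin f (Ioi u) u = f b - f a :=
  intervalIntegral.integral_eq_sub_of_hasDeriv_right_of_le hab hf.continuous.continuousOn
    (fun _ _ => hf.hasDerivWithinAt_rightDeriv_of_mem_interior (by simp))
    hf.monotone_rightDeriv.intervalIntegrable

lemma setLIntegral_Ioi_ofReal_sub_eq (hf : ConvexOn ℝ univ f) {a b : ℝ} (hab : a ≤ b) :
    ∫⁻ t in Ioi a, ENNReal.ofReal (b - t) ∂hf.rightDerivStieltjes.measure =
      ENNReal.ofReal (f b - f a - derivWithin f (Ioi a) a * (b - a)) := by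
  have hmono := hf.monotone_rightDeriv
  have hint : IntegrableOn (fun u => derivWithin f (Ioi u) u - derivWithin f (Ioi a) a)
      (Ioc a b) :=
    (hmono.intervalIntegrable.sub intervalIntegrable_const).1
  rw [setLIntegral_ofReal_sub_eq_lintegral_measure_inter_Iic _ measurableSet_Ioi]
  simp only [Ioi_inter_Iic, StieltjesFunction.measure_Ioc, rightDerivStieltjes_apply]
  rw [← Iic_union_Ioc_eq_Iic hab, lintegral_union measurableSet_Ioc (Iic_disjoint_Ioc le_rfl),
    setLIntegral_congr_fun measurableSet_Iic (g := fun _ => 0)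
      (fun u hu => ENNReal.ofReal_eq_zero.2 (sub_nonpos.2 (hmono hu))),
    lintegral_zero, zero_add, ← ofReal_integral_eq_lintegral_ofReal hint
      ((ae_restrict_iff' measurableSet_Ioc).2
        (ae_of_all _ fun u hu => sub_nonneg.2 (hmono hu.1.le))),
    ← intervalIntegral.integral_of_le hab,
    intervalIntegral.integral_sub hmono.intervalIntegrable intervalIntegrable_const,
    hf.integral_rightDeriv hab, intervalIntegral.integral_const, smul_eq_mul, mul_comm]

lemma setLIntegral_Iic_ofReal_sub_eq (hf : ConvexOn ℝ univ f) {a b : ℝ} (hab : a ≤ b) :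
    ∫⁻ t in Iic b, ENNReal.ofReal (t - a) ∂hf.rightDerivStieltjes.measure =
      ENNReal.ofReal (f a - f b - derivWithin f (Ioi b) b * (a - b)) := by
  have hmono := hf.monotone_rightDeriv
  have hint : IntegrableOn (fun u => derivWithin f (Ioi b) b - derivWithin f (Ioi u) u)
      (Ioc a b) :=
    (intervalIntegrable_const.sub hmono.intervalIntegrable).1
  rw [setLIntegral_ofReal_sub_eq_lintegral_measure_inter_Ioi _ measurableSet_Iic]
  simp only [Iic_inter_Ioi, StieltjesFunction.measure_Ioc, rightDerivStieltjes_apply]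
  rw [← Ioc_union_Ioi_eq_Ioi hab, lintegral_union measurableSet_Ioi Ioc_disjoint_Ioi_same,
    setLIntegral_congr_fun measurableSet_Ioi (g := fun _ => 0)
      (fun u hu => ENNReal.ofReal_eq_zero.2 (sub_nonpos.2 (hmono (le_of_lt hu)))),
    lintegral_zero, add_zero, ← ofReal_integral_eq_lintegral_ofReal hint
      ((ae_restrict_iff' measurableSet_Ioc).2
        (ae_of_all _ fun u hu => sub_nonneg.2 (hmono hu.2))),
    ← intervalIntegral.integral_of_le hab,
    intervalIntegral.integral_sub intervalIntegrable_const hmono.intervalIntegrable,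
    hf.integral_rightDeriv hab, intervalIntegral.integral_const, smul_eq_mul]
  ring_nf

lemma ofReal_sub_sub_rightDeriv_mul_eq (hf : ConvexOn ℝ univ f) (a x : ℝ) :
    ENNReal.ofReal (f x - f a - derivWithin f (Ioi a) a * (x - a)) =
      ∫⁻ t in Ioi a, ENNReal.ofReal (x - t) ∂hf.rightDerivStieltjes.measure +
        ∫⁻ t in Iic a, ENNReal.ofReal (t - x) ∂hf.rightDerivStieltjes.measure := by
  rcases le_total a x with hax | hxa
  · rw [hf.setLIntegral_Ioi_ofReal_sub_eq hax,
      setLIntegral_congr_fun measurableSet_Iic (g := fun _ => 0)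
        (fun t ht => ENNReal.ofReal_eq_zero.2 (by linarith [mem_Iic.1 ht])),
      lintegral_zero, add_zero]
  · rw [hf.setLIntegral_Iic_ofReal_sub_eq hxa,
      setLIntegral_congr_fun measurableSet_Ioi (g := fun _ => 0)
        (fun t ht => ENNReal.ofReal_eq_zero.2 (by linarith [mem_Ioi.1 ht])),
      lintegral_zero, zero_add]

lemma lintegral_ofReal_sub_sub_rightDeriv_mul_eq (hf : ConvexOn ℝ univ f) (a : ℝ)
    (μ : Measure ℝ) [SFinite μ] :
    ∫⁻ x, ENNReal.ofReal (f x - f a - derivWithin f (Ioi a) a * (x - a)) ∂μ =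
      ∫⁻ t in Ioi a, ∫⁻ x, ENNReal.ofReal (x - t) ∂μ ∂hf.rightDerivStieltjes.measure +
        ∫⁻ t in Iic a, ∫⁻ x, ENNReal.ofReal (t - x) ∂μ ∂hf.rightDerivStieltjes.measure := by
  have hmeas : Measurable fun p : ℝ × ℝ => ENNReal.ofReal (p.1 - p.2) :=
    (measurable_fst.sub measurable_snd).ennreal_ofReal
  have hmeas' : Measurable fun p : ℝ × ℝ => ENNReal.ofReal (p.2 - p.1) :=
    (measurable_snd.sub measurable_fst).ennreal_ofReal
  simp_rw [hf.ofReal_sub_sub_rightDeriv_mul_eq a]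
  rw [lintegral_add_left hmeas.lintegral_prod_right']
  exact congr_arg₂ (· + ·) (lintegral_lintegral_swap hmeas.aemeasurable)
    (lintegral_lintegral_swap hmeas'.aemeasurable)

lemma lintegral_ofReal_sub_sub_rightDeriv_mul_mono (hf : ConvexOn ℝ univ f) (a : ℝ)
    {μ ν : Measure ℝ} [SFinite μ] [SFinite ν]
    (hright : ∀ t, ∫⁻ x, ENNReal.ofReal (x - t) ∂μ ≤ ∫⁻ x, ENNReal.ofReal (x - t) ∂ν)
    (hleft : ∀ t, ∫⁻ x, ENNReal.ofReal (t - x) ∂μ ≤ ∫⁻ x, ENNReal.ofReal (t - x) ∂ν) :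
    ∫⁻ x, ENNReal.ofReal (f x - f a - derivWithin f (Ioi a) a * (x - a)) ∂μ ≤
      ∫⁻ x, ENNReal.ofReal (f x - f a - derivWithin f (Ioi a) a * (x - a)) ∂ν := by
  rw [hf.lintegral_ofReal_sub_sub_rightDeriv_mul_eq a μ,
    hf.lintegral_ofReal_sub_sub_rightDeriv_mul_eq a ν]
  exact add_le_add (lintegral_mono fun t => hright t) (lintegral_mono fun t => hleft t)

end ConvexOn

lemma ofReal_integral_max_zero {α : Type*} [MeasurableSpace α] {μ : Measure α} {g : α → ℝ}
    (hg : Integrable g μ) :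
    ENNReal.ofReal (∫ x, max (g x) 0 ∂μ) = ∫⁻ x, ENNReal.ofReal (g x) ∂μ := by
  rw [ofReal_integral_eq_lintegral_ofReal hg.pos_part (ae_of_all _ fun _ => le_max_right _ _)]
  simp [ENNReal.ofReal_max]

lemma lintegral_ofReal_sub_eq_setLIntegral_measure_Iic (μ : Measure ℝ) [SFinite μ] (t : ℝ) :
    ∫⁻ x, ENNReal.ofReal (t - x) ∂μ = ∫⁻ s in Iic t, μ (Iic s) := by
  simpa using setLIntegral_ofReal_sub_eq_lintegral_measure_inter_Iic μ MeasurableSet.univ t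

section Hinge

variable {μ : Measure ℝ} [IsFiniteMeasure μ]

lemma integrableOn_measure_Iic_toReal (hμ : Integrable (fun x : ℝ => x) μ) (t : ℝ) :
    IntegrableOn (fun s => (μ (Iic s)).toReal) (Iic t) := by
  refine integrable_toReal_of_lintegral_ne_top
    (Monotone.measurable fun _ _ h => measure_mono (Iic_subset_Iic.2 h)).aemeasurable ?_
  rw [← lintegral_ofReal_sub_eq_setLIntegral_measure_Iic,
    ← ofReal_integral_max_zero (g := fun x => t - x) ((integrable_const t).sub hμ)]
  exact ENNReal.ofReal_ne_top

lemma integral_max_sub_eq_setIntegral_measure_Iic (hμ : Integrable (fun x : ℝ => x) μ) (t : ℝ) :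
    ∫ x, max (t - x) 0 ∂μ = ∫ s in Iic t, (μ (Iic s)).toReal := by
  rw [integral_toReal
      (Monotone.measurable fun _ _ h => measure_mono (Iic_subset_Iic.2 h)).aemeasurable
      (ae_of_all _ fun _ => measure_lt_top _ _),
    ← lintegral_ofReal_sub_eq_setLIntegral_measure_Iic,
    ← ofReal_integral_max_zero (g := fun x => t - x) ((integrable_const t).sub hμ)]
  exact (ENNReal.toReal_ofReal (integral_nonneg fun _ => le_max_right _ _)).symm

end Hinge

section Probability

variable {μ : Measure ℝ} [IsProbabilityMeasure μ]

lemma integral_max_sub_eq_integral_max_sub_add (hμ : Integrable (fun x : ℝ => x) μ) (t : ℝ) :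
    ∫ x, max (x - t) 0 ∂μ = ∫ x, max (t - x) 0 ∂μ + (∫ x, x ∂μ - t) := by
  have hsplit : (fun x => max (x - t) 0) = fun x => max (t - x) 0 + (x - t) := by
    ext x; rcases le_total x t with h | h <;> simp [h]
  have hleft : Integrable (fun x => max (t - x) 0) μ := ((integrable_const t).sub hμ).pos_part
  have hlin : Integrable (fun x => x - t) μ := hμ.sub (integrable_const t)
  rw [hsplit, integral_add hleft hlin, integral_sub hμ (integrable_const t), integral_const,
    probReal_univ, one_smul]

lemma integral_sub_sub_mul_sub (hμ : Integrable (fun x : ℝ => x) μ)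
    {f : ℝ → ℝ} (hf : Integrable f μ) (a b c : ℝ) :
    ∫ x, (f x - b - c * (x - a)) ∂μ = ∫ x, f x ∂μ - b - c * (∫ x, x ∂μ - a) := by
  have h1 : Integrable (fun x => f x - b) μ := hf.sub (integrable_const b)
  have h2 : Integrable (fun x => x - a) μ := hμ.sub (integrable_const a)
  rw [integral_sub h1 (h2.const_mul c), integral_sub hf (integrable_const b), integral_const_mul,
    integral_sub hμ (integrable_const a)]
  simp

end Probability

namespace ConvexOn

variable {f : ℝ → ℝ}

lemma integral_sub_sub_rightDeriv_mul_mono (hf : ConvexOn ℝ univ f) (a : ℝ)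
    {μ ν : Measure ℝ} [IsFiniteMeasure μ] [IsFiniteMeasure ν]
    (hμ : Integrable (fun x : ℝ => x) μ) (hν : Integrable (fun x : ℝ => x) ν)
    (hfμ : Integrable f μ) (hfν : Integrable f ν)
    (hright : ∀ t, ∫ x, max (x - t) 0 ∂μ ≤ ∫ x, max (x - t) 0 ∂ν)
    (hleft : ∀ t, ∫ x, max (t - x) 0 ∂μ ≤ ∫ x, max (t - x) 0 ∂ν) :
    ∫ x, (f x - f a - derivWithin f (Ioi a) a * (x - a)) ∂μ ≤
      ∫ x, (f x - f a - derivWithin f (Ioi a) a * (x - a)) ∂ν := by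
  have hgap_nonneg : ∀ x, 0 ≤ f x - f a - derivWithin f (Ioi a) a * (x - a) := fun x => by
    linarith [hf.add_rightDeriv_mul_sub_le a x]
  have hgap_integrable {m : Measure ℝ} [IsFiniteMeasure m] (hm : Integrable (fun x : ℝ => x) m)
      (hfm : Integrable f m) :
      Integrable (fun x => f x - f a - derivWithin f (Ioi a) a * (x - a)) m :=
    (hfm.sub (integrable_const _)).sub ((hm.sub (integrable_const a)).const_mul _)
  rw [← ENNReal.ofReal_le_ofReal_iff (integral_nonneg hgap_nonneg),
    ofReal_integral_eq_lintegral_ofReal (hgap_integrable hμ hfμ) (ae_of_all _ hgap_nonneg),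
    ofReal_integral_eq_lintegral_ofReal (hgap_integrable hν hfν) (ae_of_all _ hgap_nonneg)]
  refine hf.lintegral_ofReal_sub_sub_rightDeriv_mul_mono a (fun t => ?_) (fun t => ?_)
  · rw [← ofReal_integral_max_zero (g := fun x => x - t) (hμ.sub (integrable_const t)),
      ← ofReal_integral_max_zero (g := fun x => x - t) (hν.sub (integrable_const t))]
    exact ENNReal.ofReal_le_ofReal (hright t)
  · rw [← ofReal_integral_max_zero (g := fun x => t - x) ((integrable_const t).sub hμ),
      ← ofReal_integral_max_zero (g := fun x => t - x) ((integrable_const t).sub hν)]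
    exact ENNReal.ofReal_le_ofReal (hleft t)

theorem integral_le_integral_of_integral_max_sub_le (hf : ConvexOn ℝ univ f)
    {μ ν : Measure ℝ} [IsProbabilityMeasure μ] [IsProbabilityMeasure ν]
    (hμ : Integrable (fun x : ℝ => x) μ) (hν : Integrable (fun x : ℝ => x) ν)
    (hmean : ∫ x, x ∂μ = ∫ x, x ∂ν)
    (hleft : ∀ t, ∫ x, max (t - x) 0 ∂μ ≤ ∫ x, max (t - x) 0 ∂ν)
    (hfμ : Integrable f μ) (hfν : Integrable f ν) :
    ∫ x, f x ∂μ ≤ ∫ x, f x ∂ν := by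
  have hright (t : ℝ) : ∫ x, max (x - t) 0 ∂μ ≤ ∫ x, max (x - t) 0 ∂ν := by
    rw [integral_max_sub_eq_integral_max_sub_add hμ, integral_max_sub_eq_integral_max_sub_add hν,
      hmean]
    linarith [hleft t]
  have h := hf.integral_sub_sub_rightDeriv_mul_mono 0 hμ hν hfμ hfν hright hleft
  rw [integral_sub_sub_mul_sub hμ hfμ, integral_sub_sub_mul_sub hν hfν, hmean] at h
  linarith

end ConvexOn

/-- If distribution A second-order stochastically dominates B (the integral of the CDF
difference F_B - F_A over (-∞, x] is nonnegative for all x) and A and B have equal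
finite means, then E_{x~B}[f(x)] ≥ E_{x~A}[f(x)] for every convex f for which both
expectations exist. -/
theorem sosd_convex_expectation (μA μB : Measure ℝ)
    [IsProbabilityMeasure μA] [IsProbabilityMeasure μB]
    (hdom : ∀ x : ℝ,
      0 ≤ ∫ t in Set.Iic x, ((μB (Set.Iic t)).toReal - (μA (Set.Iic t)).toReal))
    (hintA : Integrable (fun x : ℝ => x) μA) (hintB : Integrable (fun x : ℝ => x) μB)
    (hmean : ∫ x, x ∂μA = ∫ x, x ∂μB)
    (f : ℝ → ℝ) (hf : ConvexOn ℝ Set.univ f)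
    (hfA : Integrable f μA) (hfB : Integrable f μB) :
    ∫ x, f x ∂μA ≤ ∫ x, f x ∂μB := by
  refine hf.integral_le_integral_of_integral_max_sub_le hintA hintB hmean (fun t => ?_) hfA hfB
  have h := hdom t
  rw [integral_sub (integrableOn_measure_Iic_toReal hintB t)
    (integrableOn_measure_Iic_toReal hintA t)] at h
  rw [integral_max_sub_eq_setIntegral_measure_Iic hintA,
    integral_max_sub_eq_setIntegral_measure_Iic hintB]
  linarith
end

section
/- Consider a single item with horizon distribution H of mean μ and i.i.d. buyer valuations from V. Let p satisfy P_{X~V}[X ≥ p] = 1/μ. Then the optimal (prophet) expected welfare is at most E_{X~V}[X | X ≥ p], i.e., the solution of the LP maximizing Σ_v y(v)·v subject to Σ_v y(v) ≤ 1 and y(v) ≤ μ·P[X = v] for all v equals E[X | X ≥ p]. -/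
/-!
The threshold allocation `y i = μ w i` on the values `a i ≥ p` (and `0` elsewhere) is feasible
and uses the budget exactly. Optimality is weak LP duality: with the price `q = max p 0` on the
budget and `μ w i (a i - q)⁺` on the capacities, every feasible `y` satisfies pointwise
`y i a i ≤ q y i + μ w i (a i - q)⁺`, and summing gives `∑ y a ≤ q + μ ∑_{a ≥ p} w a - q`.
-/

variable {ι : Type*}

def prophetLPValues (μ : ℝ) (w a : ι → ℝ) : Set ℝ :=
  {S | ∃ y : ι → ℝ, (∀ i, 0 ≤ y i) ∧ (∀ i, y i ≤ μ * w i) ∧ (∑' i, y i) ≤ 1 ∧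
    S = ∑' i, y i * a i}

theorem mul_le_threshold_dual {y a w μ q : ℝ} {P : Prop} [Decidable P] (hy0 : 0 ≤ y)
    (hyw : y ≤ μ * w) (hP : P → q ≤ a) (hnP : ¬P → a ≤ q) :
    y * a ≤ q * y + μ * (if P then w * a else 0) - q * (μ * if P then w else 0) := by
  split_ifs with h
  · nlinarith [hP h]
  · nlinarith [hnP h]

theorem Summable.ite_zero {f : ι → ℝ} (hf : Summable f) (P : ι → Prop) [DecidablePred P] :
    Summable fun i => if P i then f i else 0 :=
  hf.summable_of_eq_zero_or_self fun i => by split_ifs <;> simp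

section Threshold

variable {a w : ι → ℝ} {μ q : ℝ} {P : ι → Prop} [DecidablePred P]

theorem threshold_mem_prophetLPValues (hw : ∀ i, 0 ≤ w i) (hμ : 0 ≤ μ)
    (hmass : μ * ∑' i, (if P i then w i else 0) = 1) :
    μ * ∑' i, (if P i then w i * a i else 0) ∈ prophetLPValues μ w a := by
  refine ⟨fun i => if P i then μ * w i else 0, fun i => ?_, fun i => ?_, ?_, ?_⟩
  · exact ite_nonneg (mul_nonneg hμ (hw i)) le_rfl
  · dsimp only
    split_ifs
    exacts [le_rfl, mul_nonneg hμ (hw i)]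
  · simp_rw [← mul_ite_zero, tsum_mul_left, hmass, le_rfl]
  · simp_rw [ite_zero_mul, mul_assoc, ← mul_ite_zero, tsum_mul_left]

theorem le_threshold_of_mem_prophetLPValues (ha : ∀ i, 0 ≤ a i) (hwsum : Summable w)
    (hwa : Summable fun i => w i * a i) (hq : 0 ≤ q)
    (hPq : ∀ i, P i → q ≤ a i) (hnPq : ∀ i, ¬P i → a i ≤ q)
    (hmass : μ * ∑' i, (if P i then w i else 0) = 1) {S : ℝ}
    (hS : S ∈ prophetLPValues μ w a) :
    S ≤ μ * ∑' i, (if P i then w i * a i else 0) := by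
  obtain ⟨y, hy0, hyw, hy1, rfl⟩ := hS
  have hy : Summable y := (hwsum.mul_left μ).of_nonneg_of_le hy0 hyw
  have hya : Summable fun i => y i * a i :=
    (hwa.mul_left μ).of_nonneg_of_le (fun i => mul_nonneg (hy0 i) (ha i))
      fun i => (mul_le_mul_of_nonneg_right (hyw i) (ha i)).trans_eq (mul_assoc _ _ _)
  have hqy : Summable fun i => q * y i := hy.mul_left q
  have hμwa : Summable fun i => μ * if P i then w i * a i else 0 := (hwa.ite_zero P).mul_left μ
  have hqμw : Summable fun i => q * (μ * if P i then w i else 0) :=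
    ((hwsum.ite_zero P).mul_left μ).mul_left q
  calc ∑' i, y i * a i
      ≤ ∑' i, (q * y i + μ * (if P i then w i * a i else 0) - q * (μ * if P i then w i else 0)) :=
        hya.tsum_le_tsum (fun i => mul_le_threshold_dual (hy0 i) (hyw i) (hPq i) (hnPq i))
          ((hqy.add hμwa).sub hqμw)
    _ = q * ∑' i, y i + μ * ∑' i, (if P i then w i * a i else 0) - q := by
        rw [(hqy.add hμwa).tsum_sub hqμw, hqy.tsum_add hμwa, tsum_mul_left, tsum_mul_left,
          tsum_mul_left, tsum_mul_left, hmass, mul_one]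
    _ ≤ μ * ∑' i, (if P i then w i * a i else 0) := by nlinarith

end Threshold

/-- LP upper bound for the prophet with a single item: for a discrete valuation
distribution with values `a i` and probabilities `w i`, and `p` with P[X ≥ p] = 1/μ,
the LP maximizing ∑ y(v)·v subject to ∑ y(v) ≤ 1 and y(v) ≤ μ·P[X = v] has optimal
value E[X | X ≥ p] = μ · ∑_{a i ≥ p} w i · a i. -/
theorem prophet_lp_value (a w : ℕ → ℝ) (ha : ∀ i, 0 ≤ a i) (hw : ∀ i, 0 ≤ w i)
    (hw1 : ∑' i, w i = 1) (hsa : Summable (fun i => w i * a i))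
    (μ p : ℝ) (hμ : 1 ≤ μ)
    (hp : ∑' i, (if p ≤ a i then w i else 0) = 1 / μ) :
    IsGreatest {S : ℝ | ∃ y : ℕ → ℝ, (∀ i, 0 ≤ y i) ∧ (∀ i, y i ≤ μ * w i) ∧
        (∑' i, y i) ≤ 1 ∧ S = ∑' i, y i * a i}
      (μ * ∑' i, (if p ≤ a i then w i * a i else 0)) := by
  have hμ0 : 0 < μ := one_pos.trans_le hμ
  have hwsum : Summable w := by
    by_contra h
    simp [tsum_eq_zero_of_not_summable h] at hw1
  have hmass : μ * ∑' i, (if p ≤ a i then w i else 0) = 1 := by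
    rw [hp, mul_one_div_cancel hμ0.ne']
  -- `max p 0` selects the same values as `p`, since all values are nonnegative
  refine ⟨threshold_mem_prophetLPValues hw hμ0.le hmass, fun S hS =>
    le_threshold_of_mem_prophetLPValues (q := max p 0) ha hwsum hsa (le_max_right p 0)
      (fun i hi => max_le hi (ha i)) (fun i hi => (not_le.1 hi).le.trans (le_max_left p 0))
      hmass hS⟩
end

section
/- For a single item with geometric horizon with continuation probability q = 1 - 1/μ and the two-point valuation distribution taking value v_L with probability 1-p and v_H with probability p (v_L < v_H), the optimal online algorithm's expected welfare equals max{ v_L(1-p) + v_H p , v_H · p/(1 - q(1-p)) }, while the prophet's expected welfare equals v_H · p/(1 - q(1-p)) + v_L · (1 - p/(1 - q(1-p))). -/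
/-!
Online side: `M := max (vL (1-p) + vH p) (vH p / (1 - q (1-p)))` satisfies the Bellman
inequality `accGain x + q (1 - accProb x) M ≤ M` for every price `x`, so by induction on the
horizon every truncated welfare sum of every policy is at most `M`. The two constant policies,
always pricing at `vL` and always pricing at `vH`, attain the two terms of the maximum.

Prophet side: among `h + 1` buyers the highest value is `vL` exactly when all of them are low,
which has probability `(1-p)^(h+1)`; averaging over the geometric horizon leaves two geometric
series.
-/

/-- Probability that a buyer (value v_H w.p. p, v_L otherwise) accepts price x. -/
noncomputable def accProb (p vL vH x : ℝ) : ℝ :=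
  if x ≤ vL then 1 else if x ≤ vH then p else 0

/-- Expected welfare gained from one buyer facing price x. -/
noncomputable def accGain (p vL vH x : ℝ) : ℝ :=
  if x ≤ vL then (1 - p) * vL + p * vH else if x ≤ vH then p * vH else 0

/-- Expected welfare of the pricing policy π (price π t at step t, if the item is
still present and unsold), where the item survives each step with probability q. -/
noncomputable def policyWelfare (q p vL vH : ℝ) (π : ℕ → ℝ) : ℝ :=
  ∑' t : ℕ, q ^ t * (∏ s ∈ Finset.range t, (1 - accProb p vL vH (π s))) *
    accGain p vL vH (π t)

noncomputable def welfareTerm (q p vL vH : ℝ) (π : ℕ → ℝ) (t : ℕ) : ℝ :=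
  q ^ t * (∏ s ∈ Finset.range t, (1 - accProb p vL vH (π s))) * accGain p vL vH (π t)

section

variable {q p vL vH : ℝ}

lemma policyWelfare_eq_tsum (π : ℕ → ℝ) :
    policyWelfare q p vL vH π = ∑' t, welfareTerm q p vL vH π t := rfl

lemma accProb_le_one (hp1 : p ≤ 1) (x : ℝ) : accProb p vL vH x ≤ 1 := by
  unfold accProb; split_ifs <;> linarith

lemma accGain_nonneg (hp0 : 0 ≤ p) (hvL : 0 ≤ vL) (hv : vL ≤ vH) (x : ℝ) :
    0 ≤ accGain p vL vH x := by
  unfold accGain; split_ifs <;> nlinarith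

lemma welfareTerm_nonneg (hq0 : 0 ≤ q) (hp0 : 0 ≤ p) (hp1 : p ≤ 1) (hvL : 0 ≤ vL)
    (hv : vL ≤ vH) (π : ℕ → ℝ) (t : ℕ) : 0 ≤ welfareTerm q p vL vH π t := by
  have hprod : 0 ≤ ∏ s ∈ Finset.range t, (1 - accProb p vL vH (π s)) :=
    Finset.prod_nonneg fun s _ => sub_nonneg.2 (accProb_le_one hp1 _)
  exact mul_nonneg (mul_nonneg (pow_nonneg hq0 t) hprod) (accGain_nonneg hp0 hvL hv _)

lemma welfareTerm_zero (π : ℕ → ℝ) : welfareTerm q p vL vH π 0 = accGain p vL vH (π 0) := by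
  simp [welfareTerm]

lemma welfareTerm_succ (π : ℕ → ℝ) (t : ℕ) :
    welfareTerm q p vL vH π (t + 1) =
      q * (1 - accProb p vL vH (π 0)) * welfareTerm q p vL vH (fun n => π (n + 1)) t := by
  rw [welfareTerm, welfareTerm, Finset.prod_range_succ']
  ring

lemma sum_range_welfareTerm_le {M : ℝ} (hq0 : 0 ≤ q) (hp1 : p ≤ 1) (hM0 : 0 ≤ M)
    (hstep : ∀ x, accGain p vL vH x + q * (1 - accProb p vL vH x) * M ≤ M) (N : ℕ) (π : ℕ → ℝ) :
    ∑ t ∈ Finset.range N, welfareTerm q p vL vH π t ≤ M := by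
  induction N generalizing π with
  | zero => simpa using hM0
  | succ n ih =>
    have hcont : 0 ≤ q * (1 - accProb p vL vH (π 0)) :=
      mul_nonneg hq0 (sub_nonneg.2 (accProb_le_one hp1 _))
    rw [Finset.sum_range_succ', welfareTerm_zero]
    simp only [welfareTerm_succ, ← Finset.mul_sum]
    linarith [hstep (π 0), mul_le_mul_of_nonneg_left (ih fun n => π (n + 1)) hcont]

lemma policyWelfare_le_of_forall_step_le {M : ℝ} (hq0 : 0 ≤ q) (hp0 : 0 ≤ p) (hp1 : p ≤ 1)
    (hvL : 0 ≤ vL) (hv : vL ≤ vH) (hM0 : 0 ≤ M)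
    (hstep : ∀ x, accGain p vL vH x + q * (1 - accProb p vL vH x) * M ≤ M) (π : ℕ → ℝ) :
    policyWelfare q p vL vH π ≤ M :=
  Real.tsum_le_of_sum_range_le (welfareTerm_nonneg hq0 hp0 hp1 hvL hv π)
    (fun N => sum_range_welfareTerm_le hq0 hp1 hM0 hstep N π)

lemma mul_one_sub_lt_one (hq1 : q < 1) (hp0 : 0 ≤ p) (hp1 : p ≤ 1) : q * (1 - p) < 1 := by
  nlinarith [mul_nonneg (sub_nonneg.2 hq1.le) (sub_nonneg.2 hp1)]

lemma accGain_add_le_max (hq1 : q < 1) (hp0 : 0 ≤ p) (hp1 : p ≤ 1)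
    (hvL : 0 ≤ vL) (hv : vL ≤ vH) (x : ℝ) :
    let M := max (vL * (1 - p) + vH * p) (vH * (p / (1 - q * (1 - p))))
    accGain p vL vH x + q * (1 - accProb p vL vH x) * M ≤ M := by
  intro M
  have hD : 0 < 1 - q * (1 - p) := sub_pos.2 (mul_one_sub_lt_one hq1 hp0 hp1)
  have hML : vL * (1 - p) + vH * p ≤ M := le_max_left _ _
  have hMH : p * vH ≤ (1 - q * (1 - p)) * M := by
    calc p * vH = (1 - q * (1 - p)) * (vH * (p / (1 - q * (1 - p)))) := by field_simp
      _ ≤ (1 - q * (1 - p)) * M := mul_le_mul_of_nonneg_left (le_max_right _ _) hD.le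
  have hM0 : 0 ≤ M := le_trans (by nlinarith) hML
  unfold accGain accProb
  split_ifs
  · linarith
  · linarith
  · nlinarith

lemma policyWelfare_const_low :
    policyWelfare q p vL vH (fun _ => vL) = vL * (1 - p) + vH * p := by
  have hacc : accProb p vL vH vL = 1 := if_pos le_rfl
  rw [policyWelfare_eq_tsum, tsum_eq_single 0]
  · simp [welfareTerm_zero, accGain]
    ring
  · intro t ht
    simp [welfareTerm, hacc, zero_pow ht]

lemma policyWelfare_const_high (hq0 : 0 ≤ q) (hq1 : q < 1) (hp0 : 0 ≤ p) (hp1 : p ≤ 1)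
    (hv : vL < vH) :
    policyWelfare q p vL vH (fun _ => vH) = vH * (p / (1 - q * (1 - p))) := by
  have hacc : accProb p vL vH vH = p := by simp [accProb, not_le.2 hv]
  have hgain : accGain p vL vH vH = p * vH := by simp [accGain, not_le.2 hv]
  have hterm : ∀ t, welfareTerm q p vL vH (fun _ => vH) t = (q * (1 - p)) ^ t * (p * vH) := by
    intro t
    simp [welfareTerm, hacc, hgain, mul_pow]
  have hD : 1 - q * (1 - p) ≠ 0 := (sub_pos.2 (mul_one_sub_lt_one hq1 hp0 hp1)).ne'
  rw [policyWelfare_eq_tsum, tsum_congr hterm, tsum_mul_right,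
    tsum_geometric_of_lt_one (mul_nonneg hq0 (by linarith)) (mul_one_sub_lt_one hq1 hp0 hp1)]
  field_simp

lemma tsum_geometric_expected_max (hq0 : 0 ≤ q) (hq1 : q < 1) (hp0 : 0 ≤ p) (hp1 : p ≤ 1) :
    (∑' h : ℕ, (1 - q) * q ^ h * (vH * (1 - (1 - p) ^ (h + 1)) + vL * (1 - p) ^ (h + 1))) =
      vH * (p / (1 - q * (1 - p))) + vL * (1 - p / (1 - q * (1 - p))) := by
  have hqp0 : 0 ≤ q * (1 - p) := mul_nonneg hq0 (by linarith)
  have hqp1 := mul_one_sub_lt_one hq1 hp0 hp1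
  have hterm : ∀ h : ℕ, (1 - q) * q ^ h * (vH * (1 - (1 - p) ^ (h + 1)) + vL * (1 - p) ^ (h + 1))
      = ((1 - q) * vH) * q ^ h - ((1 - q) * (vH - vL) * (1 - p)) * (q * (1 - p)) ^ h := by
    intro h
    rw [pow_succ, mul_pow]
    ring
  rw [tsum_congr hterm,
    Summable.tsum_sub ((summable_geometric_of_lt_one hq0 hq1).mul_left _)
      ((summable_geometric_of_lt_one hqp0 hqp1).mul_left _),
    tsum_mul_left, tsum_mul_left, tsum_geometric_of_lt_one hq0 hq1,
    tsum_geometric_of_lt_one hqp0 hqp1]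
  have hq : 1 - q ≠ 0 := by linarith
  have hD : 1 - q * (1 - p) ≠ 0 := by linarith
  field_simp
  ring

end

/-- For a single item with geometric horizon (continuation probability q) and two-point
valuations, the optimal online welfare equals
max{v_L(1-p) + v_H p, v_H·p/(1-q(1-p))}, and the prophet's welfare (expected maximum
value among the buyers arriving within the horizon) equals
v_H·p/(1-q(1-p)) + v_L·(1 - p/(1-q(1-p))). -/
theorem two_point_geometric_values (q p vL vH : ℝ) (hq0 : 0 ≤ q) (hq1 : q < 1)
    (hp0 : 0 < p) (hp1 : p < 1) (hvL : 0 ≤ vL) (hv : vL < vH) :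
    (⨆ π : ℕ → ℝ, policyWelfare q p vL vH π) =
        max (vL * (1 - p) + vH * p) (vH * (p / (1 - q * (1 - p)))) ∧
      (∑' h : ℕ, (1 - q) * q ^ h *
          (vH * (1 - (1 - p) ^ (h + 1)) + vL * (1 - p) ^ (h + 1))) =
        vH * (p / (1 - q * (1 - p))) + vL * (1 - p / (1 - q * (1 - p))) := by
  refine ⟨?_, tsum_geometric_expected_max hq0 hq1 hp0.le hp1.le⟩
  have hM0 : 0 ≤ max (vL * (1 - p) + vH * p) (vH * (p / (1 - q * (1 - p)))) :=
    le_max_of_le_left (by nlinarith)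
  have hub := policyWelfare_le_of_forall_step_le hq0 hp0.le hp1.le hvL hv.le hM0
    (accGain_add_le_max hq1 hp0.le hp1.le hvL hv.le)
  have hbdd : BddAbove (Set.range fun π => policyWelfare q p vL vH π) :=
    ⟨_, Set.forall_mem_range.2 hub⟩
  refine le_antisymm (ciSup_le hub) (max_le ?_ ?_)
  · exact policyWelfare_const_low ▸ le_ciSup hbdd _
  · exact policyWelfare_const_high hq0 hq1 hp0.le hp1.le hv ▸ le_ciSup hbdd _
end

section
/- In the setting of the previous statement, with v_H chosen so that v_L(1-p) + v_H p = v_H · p/(1 - q(1-p)), the ratio Prophet/Algorithm tends to 1 + q = 2 - 1/μ as p → 0⁺. Hence no online algorithm beats competitive ratio 2 - 1/μ for a geometric horizon with mean μ. -/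
/-- The high value chosen so that the optimal algorithm is indifferent between its two
options: v_L(1-p) + v_H p = v_H · p/(1 - q(1-p)). -/
noncomputable def vHind (q vL p : ℝ) : ℝ := vL * (1 - p) / (p / (1 - q * (1 - p)) - p)

/-- Optimal algorithm's expected welfare in the two-point geometric-horizon setting. -/
noncomputable def ALGstar (q vL p : ℝ) : ℝ :=
  max (vL * (1 - p) + vHind q vL p * p) (vHind q vL p * (p / (1 - q * (1 - p))))

/-- Prophet's expected welfare in the two-point geometric-horizon setting. -/
noncomputable def PROtp (q vL p : ℝ) : ℝ :=
  vHind q vL p * (p / (1 - q * (1 - p))) + vL * (1 - p / (1 - q * (1 - p)))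

/-!
Writing `D = 1 - q(1-p)`, the indifference value is `v_H = v_L D / (p q)`, and with it both
options of the algorithm are worth exactly `v_L / q`, while the prophet gets
`v_L / q + v_L (1 - p/D)`. So the ratio equals `1 + q (1 - p/D)`, a function continuous at
`p = 0` (where `D = 1 - q ≠ 0`) with value `1 + q`.
-/

section Indifference

variable {q vL p : ℝ}

lemma vHind_eq (hq : q ≠ 0) (hp : p ≠ 0) (hp1 : 1 - p ≠ 0) (hD : 1 - q * (1 - p) ≠ 0) :
    vHind q vL p = vL * (1 - q * (1 - p)) / (p * q) := by
  have hgap : p / (1 - q * (1 - p)) - p = p * q * (1 - p) / (1 - q * (1 - p)) := by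
    field_simp
    ring
  rw [vHind, hgap]
  field_simp

lemma vHind_mul_div (hq : q ≠ 0) (hp : p ≠ 0) (hp1 : 1 - p ≠ 0) (hD : 1 - q * (1 - p) ≠ 0) :
    vHind q vL p * (p / (1 - q * (1 - p))) = vL / q := by
  rw [vHind_eq hq hp hp1 hD]
  field_simp

lemma add_vHind_mul (hq : q ≠ 0) (hp : p ≠ 0) (hp1 : 1 - p ≠ 0) (hD : 1 - q * (1 - p) ≠ 0) :
    vL * (1 - p) + vHind q vL p * p = vL / q := by
  rw [vHind_eq hq hp hp1 hD]
  field_simp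
  ring

lemma ALGstar_eq (hq : q ≠ 0) (hp : p ≠ 0) (hp1 : 1 - p ≠ 0) (hD : 1 - q * (1 - p) ≠ 0) :
    ALGstar q vL p = vL / q := by
  rw [ALGstar, add_vHind_mul hq hp hp1 hD, vHind_mul_div hq hp hp1 hD, max_self]

lemma PROtp_eq (hq : q ≠ 0) (hp : p ≠ 0) (hp1 : 1 - p ≠ 0) (hD : 1 - q * (1 - p) ≠ 0) :
    PROtp q vL p = vL / q + vL * (1 - p / (1 - q * (1 - p))) := by
  rw [PROtp, vHind_mul_div hq hp hp1 hD]

lemma PROtp_div_ALGstar (hq : q ≠ 0) (hvL : vL ≠ 0) (hp : p ≠ 0) (hp1 : 1 - p ≠ 0)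
    (hD : 1 - q * (1 - p) ≠ 0) :
    PROtp q vL p / ALGstar q vL p = 1 + q * (1 - p / (1 - q * (1 - p))) := by
  rw [PROtp_eq hq hp hp1 hD, ALGstar_eq hq hp hp1 hD]
  field_simp

end Indifference

lemma tendsto_one_add_mul_one_sub_div {q : ℝ} (hq : q ≠ 1) :
    Filter.Tendsto (fun p : ℝ => 1 + q * (1 - p / (1 - q * (1 - p)))) (nhds 0)
      (nhds (1 + q)) := by
  have hD : (1 : ℝ) - q * (1 - 0) ≠ 0 := by
    rw [sub_zero, mul_one, sub_ne_zero]
    exact hq.symm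
  have hcont : ContinuousAt (fun p : ℝ => 1 + q * (1 - p / (1 - q * (1 - p)))) 0 := by
    fun_prop (disch := exact hD)
  simpa using hcont.tendsto

/-- With v_H chosen by indifference, the ratio Prophet/Algorithm tends to 1 + q
(= 2 - 1/μ for a geometric horizon with mean μ = 1/(1-q)) as p → 0⁺. -/
theorem two_point_ratio_limit (q vL : ℝ) (hq0 : 0 < q) (hq1 : q < 1) (hvL : 0 < vL) :
    Filter.Tendsto (fun p : ℝ => PROtp q vL p / ALGstar q vL p)
      (nhdsWithin 0 (Set.Ioi 0)) (nhds (1 + q)) := by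
  have hsmall : Set.Ioo (0 : ℝ) 1 ∈ nhdsWithin 0 (Set.Ioi 0) :=
    Ioo_mem_nhdsGT_of_mem ⟨le_rfl, one_pos⟩
  have hratio : (fun p : ℝ => 1 + q * (1 - p / (1 - q * (1 - p))))
      =ᶠ[nhdsWithin 0 (Set.Ioi 0)] fun p => PROtp q vL p / ALGstar q vL p := by
    filter_upwards [hsmall] with p ⟨hp0, hp1⟩
    have hD : 0 < 1 - q * (1 - p) := by nlinarith
    exact (PROtp_div_ALGstar hq0.ne' hvL.ne' hp0.ne' (by linarith) hD.ne').symm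
  exact ((tendsto_one_add_mul_one_sub_div hq1.ne).mono_left nhdsWithin_le_nhds).congr' hratio
end

section
/- For a biased simple random walk starting at 1 that moves left by 1 with probability x and right by 1 with probability 1-x at each step (independently), the probability of ever reaching 0 equals min(1, x/(1-x)) for x ∈ (0, 1). -/
/-- Position of the walk after `t` steps: start at 1; each `true` step moves left by 1,
each `false` step moves right by 1. -/
def walkPos (j : ℕ) (ω : Fin j → Bool) (t : ℕ) : ℤ :=
  1 + ∑ i ∈ Finset.univ.filter (fun i : Fin j => (i : ℕ) < t),
    (if ω i then (-1 : ℤ) else 1)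

/-- The walk reaches 0 within `j` steps. -/
def hitsZero (j : ℕ) (ω : Fin j → Bool) : Prop := ∃ t ≤ j, walkPos j ω t = 0

open Classical in
/-- Probability that the walk with independent left-probabilities `p i` hits 0 within
`j` steps. -/
noncomputable def walkHitProb (j : ℕ) (p : Fin j → ℝ) : ℝ :=
  ∑ ω : Fin j → Bool, (∏ i, if ω i then p i else 1 - p i) *
    (if hitsZero j ω then (1 : ℝ) else 0)

/-- f_j(x): probability that the biased walk (left with probability x) started at 1
hits 0 within j steps. -/
noncomputable def fstep (j : ℕ) (x : ℝ) : ℝ := walkHitProb j (fun _ => x)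

/-!
Write `hitProb x j h` for the probability of reaching 0 from height `h` within `j` steps,
defined by first-step analysis; the path sums defining `fstep` satisfy the same recursion.
These probabilities increase with `j`, so `fstep j x` converges to some `L ≤ 1`, and `L` is
pinned down by the map `firstStep x L = x + (1 - x) L²`. Any `m ≥ 0` with
`firstStep x m ≤ m` bounds `hitProb x j h` by `m ^ h`, whence `L ≤ min 1 (x / (1 - x))`.
Conversely, reaching 1 from 2 within `j` steps and then 0 within `j` more reaches 0 from 2,
so `hitProb` is supermultiplicative, whence `firstStep x L ≤ L`; the only such `L` lie
between the two roots `x / (1 - x)` and `1`.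
-/

open Finset Filter Topology

section FirstStep

variable {x : ℝ}

def firstStep (x L : ℝ) : ℝ := x + (1 - x) * L ^ 2

lemma firstStep_min_one_div (hx1 : x < 1) :
    firstStep x (min 1 (x / (1 - x))) = min 1 (x / (1 - x)) := by
  have : 0 < 1 - x := by linarith
  rcases le_total 1 (x / (1 - x)) with h | h
  · rw [min_eq_left h, firstStep]; ring
  · rw [min_eq_right h, firstStep]; field_simp; ring

lemma min_one_div_le_of_firstStep_le (hx1 : x < 1) {L : ℝ} (hL : firstStep x L ≤ L) :
    min 1 (x / (1 - x)) ≤ L := by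
  have hfac : (L - 1) * ((1 - x) * L - x) ≤ 0 := by unfold firstStep at hL; nlinarith
  rcases le_or_gt 1 L with h | h
  · exact min_le_of_left_le h
  · refine min_le_of_right_le ((div_le_iff₀ (by linarith)).2 ?_)
    nlinarith

end FirstStep

/-- `hitProb x j h`: probability that the walk started at height `h` reaches 0 within
`j` steps. -/
def hitProb (x : ℝ) : ℕ → ℕ → ℝ
  | _, 0 => 1
  | 0, _ + 1 => 0
  | j + 1, h + 1 => x * hitProb x j h + (1 - x) * hitProb x j (h + 2)

section HitProb

variable {x : ℝ}

@[simp] lemma hitProb_zero_right (x : ℝ) (j : ℕ) : hitProb x j 0 = 1 := by cases j <;> rfl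

@[simp] lemma hitProb_zero_succ (x : ℝ) (h : ℕ) : hitProb x 0 (h + 1) = 0 := rfl

lemma hitProb_succ_succ (x : ℝ) (j h : ℕ) :
    hitProb x (j + 1) (h + 1) = x * hitProb x j h + (1 - x) * hitProb x j (h + 2) := rfl

lemma hitProb_nonneg (hx0 : 0 ≤ x) (hx1 : x ≤ 1) : ∀ j h, 0 ≤ hitProb x j h
  | _, 0 => by simp
  | 0, _ + 1 => le_rfl
  | j + 1, h + 1 => by
    rw [hitProb_succ_succ]
    exact add_nonneg (mul_nonneg hx0 (hitProb_nonneg hx0 hx1 j h))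
      (mul_nonneg (sub_nonneg.2 hx1) (hitProb_nonneg hx0 hx1 j (h + 2)))

lemma hitProb_le_succ (hx0 : 0 ≤ x) (hx1 : x ≤ 1) : ∀ j h, hitProb x j h ≤ hitProb x (j + 1) h
  | _, 0 => by simp
  | 0, _ + 1 => hitProb_nonneg hx0 hx1 _ _
  | j + 1, h + 1 => by
    have : 0 ≤ 1 - x := sub_nonneg.2 hx1
    rw [hitProb_succ_succ, hitProb_succ_succ x (j + 1)]
    gcongr
    exacts [hitProb_le_succ hx0 hx1 j h, hitProb_le_succ hx0 hx1 j (h + 2)]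

lemma hitProb_monotone (hx0 : 0 ≤ x) (hx1 : x ≤ 1) (h : ℕ) : Monotone (hitProb x · h) :=
  monotone_nat_of_le_succ fun j => hitProb_le_succ hx0 hx1 j h

lemma hitProb_mul_le (hx0 : 0 ≤ x) (hx1 : x ≤ 1) (b k : ℕ) :
    ∀ a h, hitProb x a h * hitProb x b k ≤ hitProb x (a + b) (h + k)
  | a, 0 => by simpa using hitProb_monotone hx0 hx1 k (Nat.le_add_left b a)
  | 0, h + 1 => by simpa using hitProb_nonneg hx0 hx1 b (h + 1 + k)
  | a + 1, h + 1 => by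
    have : 0 ≤ 1 - x := sub_nonneg.2 hx1
    have ih₂ : hitProb x a (h + 2) * hitProb x b k ≤ hitProb x (a + b) (h + k + 2) := by
      simpa only [add_right_comm h 2 k] using hitProb_mul_le hx0 hx1 b k a (h + 2)
    rw [show a + 1 + b = a + b + 1 by omega, show h + 1 + k = h + k + 1 by omega,
      hitProb_succ_succ, hitProb_succ_succ, add_mul, mul_assoc, mul_assoc]
    gcongr
    exact hitProb_mul_le hx0 hx1 b k a h

lemma hitProb_le_pow (hx0 : 0 ≤ x) (hx1 : x ≤ 1) {m : ℝ} (hm : 0 ≤ m)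
    (hfix : firstStep x m ≤ m) : ∀ j h, hitProb x j h ≤ m ^ h
  | _, 0 => by simp
  | 0, _ + 1 => by rw [hitProb_zero_succ]; positivity
  | j + 1, h + 1 => by
    have : 0 ≤ 1 - x := sub_nonneg.2 hx1
    calc hitProb x (j + 1) (h + 1)
        ≤ x * m ^ h + (1 - x) * m ^ (h + 2) := by
          rw [hitProb_succ_succ]
          gcongr
          exacts [hitProb_le_pow hx0 hx1 hm hfix j h, hitProb_le_pow hx0 hx1 hm hfix j (h + 2)]
      _ = m ^ h * firstStep x m := by rw [firstStep]; ring
      _ ≤ m ^ (h + 1) := by rw [pow_succ]; gcongr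

lemma hitProb_le_one (hx0 : 0 ≤ x) (hx1 : x ≤ 1) (j h : ℕ) : hitProb x j h ≤ 1 := by
  simpa using hitProb_le_pow hx0 hx1 zero_le_one (by simp [firstStep]) j h

lemma firstStep_hitProb_le (hx0 : 0 ≤ x) (hx1 : x ≤ 1) (j : ℕ) :
    firstStep x (hitProb x j 1) ≤ hitProb x (j + j + 1) 1 := by
  have : 0 ≤ 1 - x := sub_nonneg.2 hx1
  rw [firstStep, hitProb_succ_succ, hitProb_zero_right, mul_one, sq]
  gcongr
  exact hitProb_mul_le hx0 hx1 j 1 j 1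

end HitProb

section PathSums

def displacement {j : ℕ} (ω : Fin j → Bool) (t : ℕ) : ℤ :=
  ∑ i ∈ univ.filter (fun i : Fin j => (i : ℕ) < t), if ω i then (-1 : ℤ) else 1

def hitsFrom (s : ℤ) {j : ℕ} (ω : Fin j → Bool) : Prop :=
  ∃ t ≤ j, s + displacement ω t = 0

def pathWeight (x : ℝ) {j : ℕ} (ω : Fin j → Bool) : ℝ :=
  ∏ i, if ω i then x else 1 - x

open Classical in
noncomputable def walkHitProbFrom (x : ℝ) (j : ℕ) (s : ℤ) : ℝ :=
  ∑ ω : Fin j → Bool, pathWeight x ω * (if hitsFrom s ω then (1 : ℝ) else 0)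

lemma Fintype.sum_fin_succ_pi {α M : Type*} [Fintype α] [AddCommMonoid M] {j : ℕ}
    (F : (Fin (j + 1) → α) → M) : ∑ ω, F ω = ∑ b, ∑ ω : Fin j → α, F (Fin.cons b ω) := by
  rw [← (Fin.consEquiv fun _ => α).sum_comp, Fintype.sum_prod_type]
  rfl

variable {j : ℕ}

lemma displacement_cons_succ (b : Bool) (ω : Fin j → Bool) (t : ℕ) :
    displacement (Fin.cons b ω : Fin (j + 1) → Bool) (t + 1)
      = (if b then -1 else 1) + displacement ω t := by
  simp [displacement, sum_filter, Fin.sum_univ_succ]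

lemma hitsFrom_cons_iff (s : ℤ) (b : Bool) (ω : Fin j → Bool) :
    hitsFrom s (Fin.cons b ω : Fin (j + 1) → Bool)
      ↔ s = 0 ∨ hitsFrom (s + if b then -1 else 1) ω := by
  constructor
  · rintro ⟨_ | t, ht, hsum⟩
    · simpa [displacement] using Or.inl hsum
    · rw [displacement_cons_succ] at hsum
      exact Or.inr ⟨t, by omega, by linarith⟩
  · rintro (hs | ⟨t, ht, hsum⟩)
    · exact ⟨0, by omega, by simpa [displacement] using hs⟩
    · exact ⟨t + 1, by omega, by rw [displacement_cons_succ]; linarith⟩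

lemma pathWeight_cons (x : ℝ) (b : Bool) (ω : Fin j → Bool) :
    pathWeight x (Fin.cons b ω : Fin (j + 1) → Bool)
      = (if b then x else 1 - x) * pathWeight x ω := by
  simp [pathWeight, Fin.prod_univ_succ]

lemma sum_pathWeight (x : ℝ) : ∑ ω : Fin j → Bool, pathWeight x ω = 1 := by
  simp only [pathWeight]
  rw [← Fintype.prod_sum fun _ (b : Bool) => if b then x else 1 - x]
  simp

lemma walkHitProbFrom_zero (x : ℝ) (s : ℤ) :
    walkHitProbFrom x 0 s = if s = 0 then 1 else 0 := by
  simp [walkHitProbFrom, hitsFrom, displacement, pathWeight]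

lemma walkHitProbFrom_succ (x : ℝ) (s : ℤ) (hs : s ≠ 0) :
    walkHitProbFrom x (j + 1) s
      = x * walkHitProbFrom x j (s - 1) + (1 - x) * walkHitProbFrom x j (s + 1) := by
  classical
  simp [walkHitProbFrom, Fintype.sum_fin_succ_pi, hitsFrom_cons_iff, hs, pathWeight_cons,
    mul_sum, sub_eq_add_neg]

lemma walkHitProbFrom_succ_zero (x : ℝ) : walkHitProbFrom x (j + 1) 0 = 1 := by
  simp [walkHitProbFrom, Fintype.sum_fin_succ_pi, hitsFrom_cons_iff, pathWeight_cons,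
    ← mul_sum, sum_pathWeight]

end PathSums

lemma walkHitProbFrom_natCast (x : ℝ) : ∀ j h : ℕ, walkHitProbFrom x j h = hitProb x j h
  | 0, 0 => by simp [walkHitProbFrom_zero]
  | j + 1, 0 => walkHitProbFrom_succ_zero x
  | 0, h + 1 => by rw [walkHitProbFrom_zero, if_neg (by omega), hitProb_zero_succ]
  | j + 1, h + 1 => by
    rw [walkHitProbFrom_succ x _ (by omega), hitProb_succ_succ, ← walkHitProbFrom_natCast x j h,
      ← walkHitProbFrom_natCast x j (h + 2), show ((h + 1 : ℕ) : ℤ) - 1 = h by omega,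
      show ((h + 1 : ℕ) : ℤ) + 1 = ((h + 2 : ℕ) : ℤ) by omega]

-- `hitsZero j` unfolds to `hitsFrom 1`, so `fstep j x` is `walkHitProbFrom x j 1`.
lemma fstep_eq_hitProb (j : ℕ) (x : ℝ) : fstep j x = hitProb x j 1 :=
  walkHitProbFrom_natCast x j 1

/-- For the biased random walk starting at 1 moving left with probability x ∈ (0,1),
the probability of ever reaching 0 (the limit of the j-step hitting probabilities)
equals min(1, x/(1-x)). -/
theorem walk_hitting_probability (x : ℝ) (hx0 : 0 < x) (hx1 : x < 1) :
    Filter.Tendsto (fun j => fstep j x) Filter.atTop (nhds (min 1 (x / (1 - x)))) := by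
  simp only [fstep_eq_hitProb]
  have hbdd : BddAbove (Set.range (hitProb x · 1)) :=
    ⟨1, Set.forall_mem_range.2 fun j => hitProb_le_one hx0.le hx1.le j 1⟩
  have hlim := tendsto_atTop_ciSup (hitProb_monotone hx0.le hx1.le 1) hbdd
  set L := ⨆ j, hitProb x j 1
  have hupper : L ≤ min 1 (x / (1 - x)) := ciSup_le fun j => by
    simpa using hitProb_le_pow hx0.le hx1.le (by positivity) (firstStep_min_one_div hx1).le j 1
  have hstep : Tendsto (fun j => firstStep x (hitProb x j 1)) atTop (𝓝 (firstStep x L)) :=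
    tendsto_const_nhds.add (tendsto_const_nhds.mul (hlim.pow 2))
  have hlower : min 1 (x / (1 - x)) ≤ L :=
    min_one_div_le_of_firstStep_le hx1 (le_of_tendsto' hstep fun j =>
      (firstStep_hitProb_le hx0.le hx1.le j).trans (le_ciSup hbdd _))
  rwa [le_antisymm hupper hlower] at hlim
end

section
/- Two coupled stochastic processes: if process A reaches 0 only when process B does (coupling where each decrement of B's counter implies progress in A), then P[A hits 0] ≤ P[B hits 0]. Concretely: if at each of j steps the probability the counter decreases is at least x, then the probability the counter (started at 1, incremented otherwise) hits 0 within those j steps is at least f_j(x), the j-step hitting probability of the biased random walk with left-probability x. -/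
lemma walkPos_zero (j : ℕ) (ω : Fin j → Bool) : walkPos j ω 0 = 1 := by
  simp [walkPos]

lemma walkPos_step (j : ℕ) (ω : Fin j → Bool) (t : ℕ) :
    (walkPos j ω (t+1) - walkPos j ω t).natAbs ≤ 1 := by
  classical
  by_cases h : t < j
  · have hins : Finset.univ.filter (fun i : Fin j => (i : ℕ) < t + 1) =
        insert ⟨t, h⟩ (Finset.univ.filter (fun i : Fin j => (i : ℕ) < t)) := by
      ext i
      simp only [Finset.mem_filter, Finset.mem_univ, true_and, Finset.mem_insert]
      constructor
      · intro hi
        rcases Nat.lt_succ_iff_lt_or_eq.mp hi with h' | h'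
        · exact Or.inr h'
        · exact Or.inl (Fin.ext h')
      · rintro (rfl | hi)
        · exact Nat.lt_succ_self t
        · exact Nat.lt_succ_of_lt hi
    have hnot : (⟨t, h⟩ : Fin j) ∉ Finset.univ.filter (fun i : Fin j => (i : ℕ) < t) := by
      simp
    simp only [walkPos, hins, Finset.sum_insert hnot]
    cases ω ⟨t, h⟩ <;> simp
  · have : ∀ s : ℕ, j ≤ s → Finset.univ.filter (fun i : Fin j => (i : ℕ) < s) = Finset.univ := by
      intro s hs
      ext i; simp [lt_of_lt_of_le i.2 hs]
    rw [walkPos, walkPos, this t (le_of_not_gt h),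
      this (t+1) (le_trans (le_of_not_gt h) (Nat.le_succ t))]
    simp

lemma discrete_ivt (f : ℕ → ℤ) (hstep : ∀ n, (f (n+1) - f n).natAbs ≤ 1)
    (h0 : 0 < f 0) : ∀ t, f t ≤ 0 → ∃ s ≤ t, f s = 0 := by
  intro t
  induction t with
  | zero => intro h; omega
  | succ n ih =>
    intro h
    by_cases hn : f n ≤ 0
    · obtain ⟨s, hs, hfs⟩ := ih hn
      exact ⟨s, Nat.le_succ_of_le hs, hfs⟩
    · refine ⟨n + 1, le_refl _, ?_⟩
      have := hstep n
      omega

lemma walkPos_mono (j : ℕ) (ω ω' : Fin j → Bool) (h : ∀ i, ω i = true → ω' i = true)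
    (t : ℕ) : walkPos j ω' t ≤ walkPos j ω t := by
  unfold walkPos
  gcongr with i hi
  cases hω : ω i
  · cases ω' i <;> simp
  · rw [h i hω]

lemma hitsZero_mono (j : ℕ) (ω ω' : Fin j → Bool) (h : ∀ i, ω i = true → ω' i = true)
    (hz : hitsZero j ω) : hitsZero j ω' := by
  obtain ⟨t, ht, hpos⟩ := hz
  obtain ⟨s, hs, hfs⟩ := discrete_ivt (walkPos j ω') (walkPos_step j ω')
    (by rw [walkPos_zero]; norm_num) t (by rw [← hpos]; exact walkPos_mono j ω ω' h t)
  exact ⟨s, le_trans hs ht, hfs⟩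

open Classical in
lemma walkHitProb_split (j : ℕ) (p : Fin j → ℝ) (k : Fin j) :
    walkHitProb j p =
      ∑ σ : { i : Fin j // i ≠ k } → Bool,
        (∏ i : { i : Fin j // i ≠ k }, if σ i then p i else 1 - p i) *
        (p k * (if hitsZero j ((Equiv.funSplitAt k Bool).symm (true, σ)) then (1:ℝ) else 0)
          + (1 - p k) *
            (if hitsZero j ((Equiv.funSplitAt k Bool).symm (false, σ)) then (1:ℝ) else 0)) := by
  rw [walkHitProb, ← Equiv.sum_comp (Equiv.funSplitAt k Bool).symm, Fintype.sum_prod_type,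
    Fintype.sum_bool]
  rw [← Finset.sum_add_distrib]
  refine Finset.sum_congr rfl fun σ _ => ?_
  have hval : ∀ b : Bool, ∀ i : Fin j,
      ((Equiv.funSplitAt k Bool).symm (b, σ)) i = if h : i = k then b else σ ⟨i, h⟩ := by
    intro b i; simp [Equiv.funSplitAt_symm_apply]
  have hprod : ∀ b : Bool,
      (∏ i, if ((Equiv.funSplitAt k Bool).symm (b, σ)) i then p i else 1 - p i) =
        (if b then p k else 1 - p k) *
          ∏ i : { i : Fin j // i ≠ k }, if σ i then p i else 1 - p i := by
    intro b
    rw [Fintype.prod_eq_mul_prod_compl k]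
    congr 1
    · rw [hval b k]; simp
    · rw [Finset.prod_subtype ({k}ᶜ : Finset (Fin j)) (p := fun i => i ≠ k) (by simp)
        (fun i => if ((Equiv.funSplitAt k Bool).symm (b, σ)) i then p i else 1 - p i)]
      refine Finset.prod_congr rfl fun i _ => ?_
      rw [hval b i, dif_neg i.2]
  rw [hprod true, hprod false]
  simp only [if_true, Bool.false_eq_true, if_false]
  ring

open Classical in
lemma walkHitProb_update_le (j : ℕ) (p : Fin j → ℝ) (k : Fin j) (y : ℝ)
    (h0 : ∀ i, 0 ≤ p i) (h1 : ∀ i, p i ≤ 1) (hy0 : 0 ≤ y) (hy : y ≤ p k) :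
    walkHitProb j (Function.update p k y) ≤ walkHitProb j p := by
  rw [walkHitProb_split j p k, walkHitProb_split j (Function.update p k y) k]
  refine Finset.sum_le_sum fun σ _ => ?_
  have hCeq : (∏ i : { i : Fin j // i ≠ k },
        if σ i then Function.update p k y i else 1 - Function.update p k y i) =
      ∏ i : { i : Fin j // i ≠ k }, if σ i then p i else 1 - p i := by
    refine Finset.prod_congr rfl fun i _ => ?_
    rw [Function.update_of_ne i.2]
  rw [hCeq, Function.update_self]
  have hC : (0:ℝ) ≤ ∏ i : { i : Fin j // i ≠ k }, if σ i then p i else 1 - p i := by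
    refine Finset.prod_nonneg fun i _ => ?_
    cases σ i <;> simp [h0 i.1, h1 i.1]
  set a : ℝ := if hitsZero j ((Equiv.funSplitAt k Bool).symm (true, σ)) then (1:ℝ) else 0 with ha
  set b : ℝ := if hitsZero j ((Equiv.funSplitAt k Bool).symm (false, σ)) then (1:ℝ) else 0 with hb
  have hab : b ≤ a := by
    rw [ha, hb]
    split_ifs with h2 h1'
    · exact le_refl _
    · exfalso
      refine h1' (hitsZero_mono j _ _ ?_ h2)
      intro i hi
      rw [Equiv.funSplitAt_symm_apply] at hi ⊢
      by_cases hik : i = k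
      · simp [hik] at hi
      · simpa [hik] using hi
    · norm_num
    · exact le_refl _
  have : y * a + (1 - y) * b ≤ p k * a + (1 - p k) * b := by nlinarith
  exact mul_le_mul_of_nonneg_left this hC

/-- Coupling/domination: if a counter starts at 1 and at each of j independent steps
decreases by 1 with probability p i ≥ x (and increases by 1 otherwise), then the
probability it hits 0 within the j steps is at least f_j(x), the j-step hitting
probability of the biased walk with left-probability x. -/
theorem counter_dominates_walk (j : ℕ) (x : ℝ) (p : Fin j → ℝ)
    (hx : 0 ≤ x) (hp1 : ∀ i, p i ≤ 1) (hpx : ∀ i, x ≤ p i) :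
    fstep j x ≤ walkHitProb j p := by
  classical
  set q : ℕ → Fin j → ℝ := fun m i => if (i : ℕ) < m then p i else x with hq
  have hmain : ∀ m, m ≤ j → fstep j x ≤ walkHitProb j (q m) := by
    intro m
    induction m with
    | zero =>
      intro _
      have : q 0 = fun _ => x := by funext i; simp [hq]
      rw [this, fstep]
    | succ n ih =>
      intro hn
      have hnj : n < j := hn
      refine le_trans (ih (le_of_lt hnj)) ?_
      have hupd : q n = Function.update (q (n+1)) ⟨n, hnj⟩ x := by
        funext i
        by_cases hik : i = (⟨n, hnj⟩ : Fin j)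
        · subst hik; simp [hq]
        · rw [Function.update_of_ne hik]
          have : (i : ℕ) ≠ n := fun h => hik (Fin.ext h)
          simp only [hq]
          by_cases h' : (i : ℕ) < n
          · rw [if_pos h', if_pos (Nat.lt_succ_of_lt h')]
          · rw [if_neg h', if_neg (by omega)]
      rw [hupd]
      refine walkHitProb_update_le j (q (n+1)) ⟨n, hnj⟩ x ?_ ?_ hx ?_
      · intro i; simp only [hq]; split_ifs
        · exact le_trans hx (hpx i)
        · exact hx
      · intro i; simp only [hq]; split_ifs
        · exact hp1 i
        · exact le_trans (hpx ⟨n, hnj⟩) (hp1 ⟨n, hnj⟩)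
      · simp only [hq]
        rw [if_pos (Nat.lt_succ_self n)]
        exact hpx ⟨n, hnj⟩
  have hqj : q j = p := by
    funext i; simp [hq, i.2]
  have := hmain j (le_refl j)
  rwa [hqj] at this
end

section
/- For the distribution V supported on values 1/(q^t t²) for t = 3, ..., T with tail probabilities P[v ≥ 1/(q^t t²)] = q^t (where 1/4 ≤ q ≤ 1/e), the conditional expectation satisfies E[v | v ≥ 1/(q^t t²)] = Θ(1) · q^{-t} · (1/t - 1/(T+1)); in particular there exist universal constants 0 < c₁ ≤ c₂ such that c₁ · q^{-t}(1/t - 1/(T+1)) ≤ E[v | v ≥ 1/(q^t t²)] ≤ c₂ · q^{-t}(1/t - 1/(T+1)) for all 3 ≤ t ≤ T. -/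
/-!
Conditioning on an event of probability `q ^ t` only contributes the factor `q⁻ᵗ`. In the
remaining sum, the atom `1 / (q ^ k k²)` has mass `(1 - q) q ^ k` (or `q ^ T` at the top), so it
contributes `c_k / k²` with `c_k ∈ {1 - q, 1} ⊆ [1/2, 1]`. Since `1 / k²` lies between
`1/k - 1/(k+1)` and twice that, the sum is within constant factors of the telescoping sum
`1/t - 1/(T+1)`.
-/

open Finset

lemma sum_Icc_one_div_sub_one_div_succ {t T : ℕ} (h : t ≤ T) :
    ∑ k ∈ Icc t T, (1 / (k : ℝ) - 1 / (k + 1)) = 1 / t - 1 / (T + 1) := by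
  have h' := sum_Icc_sub h fun k : ℕ ↦ 1 / (k : ℝ)
  push_cast at h'
  rw [← neg_sub, ← h', ← sum_neg_distrib]
  simp only [neg_sub]

lemma one_div_sub_one_div_succ_le_one_div_sq (k : ℕ) :
    1 / (k : ℝ) - 1 / (k + 1) ≤ 1 / (k : ℝ) ^ 2 := by
  rcases k.eq_zero_or_pos with rfl | hk
  · norm_num
  have hk : (0 : ℝ) < k := by exact_mod_cast hk
  rw [div_sub_div _ _ hk.ne' (by positivity), div_le_div_iff₀ (by positivity) (by positivity)]
  nlinarith

lemma one_div_sq_le_two_mul_one_div_sub_one_div_succ {k : ℕ} (hk : 1 ≤ k) :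
    1 / (k : ℝ) ^ 2 ≤ 2 * (1 / (k : ℝ) - 1 / (k + 1)) := by
  have hk : (1 : ℝ) ≤ k := by exact_mod_cast hk
  rw [div_sub_div _ _ (by positivity) (by positivity), mul_div_assoc',
    div_le_div_iff₀ (by positivity) (by positivity)]
  nlinarith

theorem mul_one_div_sub_one_div_succ_le_sum_Icc_div_sq {c : ℕ → ℝ} {a : ℝ} {t T : ℕ}
    (htT : t ≤ T) (ha : 0 ≤ a) (hc : ∀ k ∈ Icc t T, a ≤ c k) :
    a * (1 / (t : ℝ) - 1 / (T + 1)) ≤ ∑ k ∈ Icc t T, c k / (k : ℝ) ^ 2 := by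
  rw [← sum_Icc_one_div_sub_one_div_succ htT, mul_sum]
  refine sum_le_sum fun k hk ↦ ?_
  calc a * (1 / (k : ℝ) - 1 / (k + 1)) ≤ a * (1 / (k : ℝ) ^ 2) :=
        mul_le_mul_of_nonneg_left (one_div_sub_one_div_succ_le_one_div_sq k) ha
    _ ≤ c k / (k : ℝ) ^ 2 := by
        rw [mul_one_div]; exact div_le_div_of_nonneg_right (hc k hk) (by positivity)

theorem sum_Icc_div_sq_le_two_mul_one_div_sub_one_div_succ {c : ℕ → ℝ} {b : ℝ} {t T : ℕ}
    (ht : 1 ≤ t) (htT : t ≤ T) (hb : 0 ≤ b) (hc : ∀ k ∈ Icc t T, c k ≤ b) :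
    ∑ k ∈ Icc t T, c k / (k : ℝ) ^ 2 ≤ 2 * b * (1 / (t : ℝ) - 1 / (T + 1)) := by
  rw [← sum_Icc_one_div_sub_one_div_succ htT, mul_sum]
  refine sum_le_sum fun k hk ↦ ?_
  calc c k / (k : ℝ) ^ 2 ≤ b * (1 / (k : ℝ) ^ 2) := by
        rw [mul_one_div]; exact div_le_div_of_nonneg_right (hc k hk) (by positivity)
    _ ≤ b * (2 * (1 / (k : ℝ) - 1 / (k + 1))) := mul_le_mul_of_nonneg_left
        (one_div_sq_le_two_mul_one_div_sub_one_div_succ (ht.trans (mem_Icc.mp hk).1)) hb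
    _ = 2 * b * (1 / (k : ℝ) - 1 / (k + 1)) := by ring

lemma tail_mass_mul_atom {q : ℝ} (hq : q ≠ 0) (k T : ℕ) :
    (if k = T then q ^ T else q ^ k - q ^ (k + 1)) * (1 / (q ^ k * (k : ℝ) ^ 2)) =
      (if k = T then 1 else 1 - q) / (k : ℝ) ^ 2 := by
  split_ifs with h
  · subst h
    rw [one_div, mul_inv, ← mul_assoc, mul_inv_cancel₀ (pow_ne_zero _ hq), one_mul, one_div]
  · rw [pow_succ, ← mul_one_sub, one_div, mul_inv, mul_mul_mul_comm,
      mul_inv_cancel₀ (pow_ne_zero _ hq), one_mul, div_eq_mul_inv]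

/-- For the distribution supported on 1/(q^t t²), t = 3,…,T, with tails
P[v ≥ 1/(q^t t²)] = q^t (so P[v = 1/(q^t t²)] = q^t - q^{t+1} for t < T and q^T for
t = T), the conditional expectation E[v | v ≥ 1/(q^t t²)] is Θ(1)·q^{-t}·(1/t - 1/(T+1)),
with universal constants valid for all q ∈ [1/4, 1/e], T ≥ 4 and 3 ≤ t ≤ T. -/
theorem tail_conditional_expectation_theta :
    ∃ c₁ c₂ : ℝ, 0 < c₁ ∧ c₁ ≤ c₂ ∧
      ∀ (q : ℝ) (T t : ℕ), 1 / 4 ≤ q → q ≤ 1 / Real.exp 1 → 4 ≤ T → 3 ≤ t → t ≤ T →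
        c₁ * (1 / (t : ℝ) - 1 / ((T : ℝ) + 1)) / q ^ t ≤
            (∑ k ∈ Finset.Icc t T,
                (if k = T then q ^ T else q ^ k - q ^ (k + 1)) *
                  (1 / (q ^ k * (k : ℝ) ^ 2))) / q ^ t ∧
          (∑ k ∈ Finset.Icc t T,
              (if k = T then q ^ T else q ^ k - q ^ (k + 1)) *
                (1 / (q ^ k * (k : ℝ) ^ 2))) / q ^ t ≤
            c₂ * (1 / (t : ℝ) - 1 / ((T : ℝ) + 1)) / q ^ t := by
  refine ⟨1 / 2, 2, by norm_num, by norm_num, fun q T t hq₁ hq₂ _ ht htT ↦ ?_⟩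
  have hq_half : q ≤ 1 / 2 :=
    hq₂.trans (one_div_le_one_div_of_le two_pos (by linarith [Real.add_one_le_exp 1]))
  have hq : 0 < q := by linarith
  simp_rw [tail_mass_mul_atom hq.ne']
  have hc : ∀ k ∈ Icc t T,
      1 / 2 ≤ (if k = T then 1 else 1 - q) ∧ (if k = T then (1 : ℝ) else 1 - q) ≤ 1 :=
    fun k _ ↦ by split_ifs <;> constructor <;> linarith
  exact ⟨div_le_div_of_nonneg_right (mul_one_div_sub_one_div_succ_le_sum_Icc_div_sq htT
      (by norm_num) fun k hk ↦ (hc k hk).1) (by positivity),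
    div_le_div_of_nonneg_right ((sum_Icc_div_sq_le_two_mul_one_div_sub_one_div_succ (by omega)
      htT zero_le_one fun k hk ↦ (hc k hk).2).trans_eq (by ring)) (by positivity)⟩
end

section
/- Truncation preserves the MHR property: if H is an MHR distribution on positive integers and H' is H conditioned on {h ≤ n} (for n with P[h ≤ n] > 0), then H' is MHR. -/
/-- Truncation preserves the MHR property: if the distribution `p` on positive integers
is MHR (in terms of its tails `T`), then its conditioning on {h ≤ n} (with mass function
`p'` and tails `T'`) is also MHR. -/
theorem truncation_preserves_mhr (p : ℕ → ℝ) (hp0 : p 0 = 0) (hnn : ∀ k, 0 ≤ p k)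
    (hsum : ∑' k, p k = 1)
    (T : ℕ → ℝ) (hT : ∀ k, T k = ∑' j : ℕ, p (k + j))
    (hMHR : ∀ k, 1 ≤ k → T (k + 2) / T (k + 1) ≤ T (k + 1) / T k)
    (n : ℕ) (hn : 1 ≤ n) (hZ : 0 < ∑ k ∈ Finset.range (n + 1), p k)
    (p' : ℕ → ℝ)
    (hp' : ∀ k, p' k = if k ≤ n then p k / (∑ j ∈ Finset.range (n + 1), p j) else 0)
    (T' : ℕ → ℝ) (hT' : ∀ k, T' k = ∑' j : ℕ, p' (k + j)) :
    ∀ k, 1 ≤ k → T' (k + 2) / T' (k + 1) ≤ T' (k + 1) / T' k := by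
  set Z := ∑ j ∈ Finset.range (n + 1), p j with hZdef
  have hZne : Z ≠ 0 := ne_of_gt hZ
  have hps : Summable p := by
    by_contra h
    rw [tsum_eq_zero_of_not_summable h] at hsum
    norm_num at hsum
  have hshift : ∀ k, Summable (fun j => p (k + j)) := by
    intro k
    have := (summable_nat_add_iff k).2 hps
    simpa [add_comm] using this
  have hp'nn : ∀ k, 0 ≤ p' k := by
    intro k
    rw [hp' k]
    split
    · exact div_nonneg (hnn k) hZ.le
    · exact le_refl 0
  have hp's : Summable p' := by
    apply summable_of_ne_finset_zero (s := Finset.range (n + 1))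
    intro k hk
    simp only [Finset.mem_range] at hk
    rw [hp' k, if_neg (by omega)]
  have hshift' : ∀ k, Summable (fun j => p' (k + j)) := by
    intro k
    have := (summable_nat_add_iff k).2 hp's
    simpa [add_comm] using this
  have hTrec : ∀ k, T k = p k + T (k + 1) := by
    intro k
    rw [hT k, hT (k + 1), Summable.tsum_eq_zero_add (hshift k)]
    congr 1
    congr 1
    funext j
    congr 1
    omega
  have hT'rec : ∀ k, T' k = p' k + T' (k + 1) := by
    intro k
    rw [hT' k, hT' (k + 1), Summable.tsum_eq_zero_add (hshift' k)]
    congr 1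
    congr 1
    funext j
    congr 1
    omega
  have hTnn : ∀ k, 0 ≤ T k := by
    intro k; rw [hT k]; exact tsum_nonneg (fun j => hnn _)
  have hT'nn : ∀ k, 0 ≤ T' k := by
    intro k; rw [hT' k]; exact tsum_nonneg (fun j => hp'nn _)
  have hT'top : ∀ k, n + 1 ≤ k → T' k = 0 := by
    intro k hk
    rw [hT' k]
    have h0 : ∀ j : ℕ, p' (k + j) = 0 := by
      intro j; rw [hp' (k + j), if_neg (by omega)]
    simp [h0]
  have hTIco : ∀ a d : ℕ, T a = (∑ m ∈ Finset.Ico a (a + d), p m) + T (a + d) := by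
    intro a d
    induction d with
    | zero => simp
    | succ d ih =>
      have h1 : a + (d + 1) = (a + d) + 1 := by ring
      rw [h1, Finset.sum_Ico_succ_top (Nat.le_add_right a d)]
      rw [ih, hTrec (a + d)]
      ring
  have hT'Ico : ∀ a d : ℕ, T' a = (∑ m ∈ Finset.Ico a (a + d), p' m) + T' (a + d) := by
    intro a d
    induction d with
    | zero => simp
    | succ d ih =>
      have h1 : a + (d + 1) = (a + d) + 1 := by ring
      rw [h1, Finset.sum_Ico_succ_top (Nat.le_add_right a d)]
      rw [ih, hT'rec (a + d)]
      ring
  have hkey : ∀ k, k ≤ n + 1 → T' k = (T k - T (n + 1)) / Z := by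
    intro k hk
    have hd : k + (n + 1 - k) = n + 1 := by omega
    have h1 := hTIco k (n + 1 - k)
    have h2 := hT'Ico k (n + 1 - k)
    rw [hd] at h1 h2
    rw [hT'top (n + 1) le_rfl, add_zero] at h2
    have hsum' : ∑ m ∈ Finset.Ico k (n + 1), p' m
        = (∑ m ∈ Finset.Ico k (n + 1), p m) / Z := by
      rw [Finset.sum_div]
      apply Finset.sum_congr rfl
      intro m hm
      simp only [Finset.mem_Ico] at hm
      rw [hp' m, if_pos (by omega)]
    have h3 : (∑ m ∈ Finset.Ico k (n + 1), p m) = T k - T (n + 1) := by linarith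
    rw [h2, hsum', h3]
  have hTanti : ∀ k, T (k + 1) ≤ T k := by
    intro k
    rw [hTrec k]
    nlinarith [hnn k]
  intro k hk
  by_cases hkn : n ≤ k
  · rw [hT'top (k + 2) (by omega), zero_div]
    exact div_nonneg (hT'nn _) (hT'nn _)
  · -- k < n, so k + 2 ≤ n + 1
    have hkn' : k + 2 ≤ n + 1 := by omega
    have hba : T (k + 1) ≤ T k := hTanti k
    have hdb : T (k + 2) ≤ T (k + 1) := hTanti (k + 1)
    have hcd : T (n + 1) ≤ T (k + 2) := by
      have hmono : ∀ m : ℕ, T (k + 2 + m) ≤ T (k + 2) := by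
        intro m
        induction m with
        | zero => simp
        | succ m ih => exact le_trans (by simpa [← add_assoc] using hTanti (k + 2 + m)) ih
      have := hmono (n + 1 - (k + 2))
      rwa [show k + 2 + (n + 1 - (k + 2)) = n + 1 by omega] at this
    have hcnn : 0 ≤ T (n + 1) := hTnn _
    have hquad : T k * T (k + 2) ≤ T (k + 1) * T (k + 1) := by
      rcases eq_or_lt_of_le (hTnn k) with h0 | h0
      · have hb0 : T (k + 1) = 0 := le_antisymm (h0 ▸ hba) (hTnn _)
        have hd0 : T (k + 2) = 0 := le_antisymm (hb0 ▸ hdb) (hTnn _)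
        simp [hd0, hb0]
      · rcases eq_or_lt_of_le (hTnn (k + 1)) with h1 | h1
        · have hd0 : T (k + 2) = 0 := le_antisymm (h1 ▸ hdb) (hTnn _)
          nlinarith
        · have := hMHR k hk
          rw [div_le_div_iff₀ h1 h0] at this
          nlinarith
    have hquad' : (T k - T (n + 1)) * (T (k + 2) - T (n + 1))
        ≤ (T (k + 1) - T (n + 1)) * (T (k + 1) - T (n + 1)) := by
      rcases eq_or_lt_of_le (le_trans hcnn hcd) with hd0 | hd0
      · have hc0 : T (n + 1) = 0 := le_antisymm (hd0 ▸ hcd) hcnn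
        rw [hc0]
        simpa using hquad
      · nlinarith [mul_nonneg (sub_nonneg.2 hcd)
          (sub_nonneg.2 hquad),
          mul_nonneg hcnn (sq_nonneg (T (k + 1) - T (k + 2)))]
    rw [hkey k (by omega), hkey (k + 1) (by omega), hkey (k + 2) (by omega)]
    have hdivZ : ∀ x y : ℝ, (x / Z) / (y / Z) = x / y := by
      intro x y
      rw [div_div_div_comm, div_self hZne, div_one]
    rw [hdivZ, hdivZ]
    have hacnn : (0:ℝ) ≤ T k - T (n + 1) := by linarith
    rcases eq_or_lt_of_le hacnn with hac | hac
    · have hbc : T (k + 1) - T (n + 1) = 0 := by nlinarith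
      have hdc : T (k + 2) - T (n + 1) = 0 := by nlinarith
      rw [hbc, hdc, ← hac]
    · rcases eq_or_lt_of_le (show (0:ℝ) ≤ T (k + 1) - T (n + 1) by linarith) with hbc | hbc
      · have hdc : T (k + 2) - T (n + 1) = 0 := by nlinarith
        rw [hdc, ← hbc, zero_div, zero_div]
      · rw [div_le_div_iff₀ hbc hac]
        nlinarith
end
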